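/- arXiv:2011.13218 — 7 statements merged into one kernel-verified Lean document; each statement's English description precedes it below -/
import Mathlib

section
/- (Nash-Williams partition theorem, 2 colours) Let A ⊆ ℕ be infinite and let 𝓕 be a thin family of finite subsets of ℕ (no member is a proper initial segment of another, where finite sets are identified with their increasing enumerations). For any c : 𝓕 → {0,1} there exist i ∈ {0,1} and an infinite A' ⊆ A such that every element of 𝓕 that is a subset of A' is coloured i. -/
/-- `S` is an initial segment of `T` (finite sets identified with increasing enumerations). -/
def InitSeg (S T : Finset ℕ) : Prop :=
  ∃ S2 : Finset ℕ, T = S ∪ S2 ∧ ∀ a ∈ S, ∀ b ∈ S2, a < b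

/-- A family of finite sets is thin: no member is a proper initial segment of another. -/
def ThinFam (F : Set (Finset ℕ)) : Prop :=
  ∀ S ∈ F, ∀ T ∈ F, InitSeg S T → S = T

/-!
Galvin–Prikry combinatorial forcing, with `G` the members of `F` of colour `0`. A set `X`
accepts `s` if `s ∪ Z` has an initial segment in `G` for every infinite `Z ⊆ X` above `s`, and
rejects `s` if no infinite subset of `X` accepts it. If some infinite `B ⊆ A` accepts `∅`, every
`S ∈ F` inside `B` and some member of `G` are initial segments of one infinite set, so thinness
makes them equal and `S` has colour `0`. Otherwise a diagonal argument gives an infinite `D ⊆ A`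
deciding each of its finite subsets. If `D` rejects `s`, it accepts `insert n s` for only finitely
many `n` (else those `n` would accept `s`), so a second diagonalisation gives `E ⊆ D` all of whose
finite subsets `D` rejects. Since every set accepts a member of `G`, no member of `G` lies in `E`.
-/

namespace NashWilliams

lemma infinite_sep_lt {X : Set ℕ} (hX : X.Infinite) (a : ℕ) : {x ∈ X | a < x}.Infinite :=
  (hX.sdiff (Set.finite_Iic a)).mono fun _ hx => ⟨hx.1, not_le.mp hx.2⟩

lemma infinite_sep_forall_lt {X : Set ℕ} (hX : X.Infinite) (s : Finset ℕ) :
    {x ∈ X | ∀ b ∈ s, b < x}.Infinite :=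
  (infinite_sep_lt hX (s.sup id)).mono fun _ hx =>
    ⟨hx.1, fun _ hb => (Finset.le_sup (f := id) hb).trans_lt hx.2⟩

lemma _root_.StrictMono.exists_subset_image_range {α : Type*} [LinearOrder α] {a : ℕ → α}
    (ha : StrictMono a) {s : Finset α} (hs : ↑s ⊆ Set.range a) :
    ∃ k, s ⊆ (Finset.range k).image a ∧ ∀ j, (∀ b ∈ s, b < a j) → k ≤ j := by
  rcases s.eq_empty_or_nonempty with rfl | hne
  · exact ⟨0, by simp, fun _ _ => Nat.zero_le _⟩
  obtain ⟨m, hm⟩ := hs (s.max'_mem hne)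
  refine ⟨m + 1, fun x hx => ?_, fun j hj => ha.lt_iff_lt.mp (hm ▸ hj _ (s.max'_mem hne))⟩
  obtain ⟨i, rfl⟩ := hs hx
  have : a i ≤ a m := hm ▸ s.le_max' _ hx
  exact Finset.mem_image_of_mem a
    (Finset.mem_range.mpr (Nat.lt_succ_of_le (ha.le_iff_le.mp this)))

section Diagonal

variable (P : Finset ℕ → Set ℕ → Prop)

noncomputable def refineAll (t : Finset ℕ) (X : Set ℕ) : Set ℕ :=
  Classical.epsilon fun Y => Y ⊆ X ∧ Y.Infinite ∧ ∀ s ⊆ t, P s Y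

/-- Stage `k` is `({a₀, …, a_{k-1}}, X_k)`, where `a_j = min X_j` and `X_{k+1} ⊆ X_k` lies above
`a_k` and satisfies `P s` for every `s ⊆ {a₀, …, a_k}`. -/
noncomputable def fusionSeq (A : Set ℕ) : ℕ → Finset ℕ × Set ℕ
  | 0 => (∅, refineAll P ∅ A)
  | k + 1 =>
    let a := sInf (fusionSeq A k).2
    (insert a (fusionSeq A k).1,
      refineAll P (insert a (fusionSeq A k).1) {x ∈ (fusionSeq A k).2 | a < x})

lemma fusionSeq_fst (A : Set ℕ) (k : ℕ) :
    (fusionSeq P A k).1 = (Finset.range k).image fun j => sInf (fusionSeq P A j).2 := by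
  induction k with
  | zero => rfl
  | succ k ih => simp only [fusionSeq, ih, Finset.range_add_one, Finset.image_insert]

variable {P} {A : Set ℕ} (hA : A.Infinite)
  (dense : ∀ s X, X ⊆ A → X.Infinite → ∃ Y ⊆ X, Y.Infinite ∧ P s Y) (anti : ∀ s, Antitone (P s))

include dense anti

lemma exists_subset_forall_mem (T : Finset (Finset ℕ)) {X : Set ℕ} (hXA : X ⊆ A)
    (hX : X.Infinite) : ∃ Y ⊆ X, Y.Infinite ∧ ∀ s ∈ T, P s Y := by
  classical
  induction T using Finset.induction_on with
  | empty => exact ⟨X, subset_rfl, hX, by simp⟩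
  | insert s T _ ih =>
    obtain ⟨Y, hYX, hY, hPY⟩ := ih
    obtain ⟨Y', hY'Y, hY', hPY'⟩ := dense s Y (hYX.trans hXA) hY
    refine ⟨Y', hY'Y.trans hYX, hY', fun u hu => ?_⟩
    rcases Finset.mem_insert.mp hu with rfl | hu
    · exact hPY'
    · exact anti u hY'Y (hPY u hu)

lemma refineAll_spec (t : Finset ℕ) {X : Set ℕ} (hXA : X ⊆ A) (hX : X.Infinite) :
    refineAll P t X ⊆ X ∧ (refineAll P t X).Infinite ∧ ∀ s ⊆ t, P s (refineAll P t X) := by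
  obtain ⟨Y, hYX, hY, hPY⟩ := exists_subset_forall_mem dense anti t.powerset hXA hX
  exact Classical.epsilon_spec (p := fun Y => Y ⊆ X ∧ Y.Infinite ∧ ∀ s ⊆ t, P s Y)
    ⟨Y, hYX, hY, fun s hs => hPY s (Finset.mem_powerset.mpr hs)⟩

include hA

lemma fusionSeq_spec (k : ℕ) : (fusionSeq P A k).2 ⊆ A ∧ (fusionSeq P A k).2.Infinite ∧
    ∀ s ⊆ (fusionSeq P A k).1, P s (fusionSeq P A k).2 := by
  induction k with
  | zero => exact refineAll_spec dense anti ∅ subset_rfl hA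
  | succ k ih =>
    have hsep : {x ∈ (fusionSeq P A k).2 | sInf (fusionSeq P A k).2 < x} ⊆ A :=
      (Set.sep_subset _ _).trans ih.1
    have h := refineAll_spec dense anti (insert (sInf (fusionSeq P A k).2) (fusionSeq P A k).1)
      hsep (infinite_sep_lt ih.2.1 _)
    exact ⟨h.1.trans hsep, h.2⟩

lemma fusionSeq_succ_subset (k : ℕ) :
    (fusionSeq P A (k + 1)).2 ⊆ {x ∈ (fusionSeq P A k).2 | sInf (fusionSeq P A k).2 < x} :=
  have ih := fusionSeq_spec hA dense anti k
  (refineAll_spec dense anti (insert (sInf (fusionSeq P A k).2) (fusionSeq P A k).1)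
    ((Set.sep_subset _ _).trans ih.1) (infinite_sep_lt ih.2.1 _)).1

theorem exists_infinite_subset_forall_finset : ∃ D ⊆ A, D.Infinite ∧
    ∀ s : Finset ℕ, ↑s ⊆ D → P s {x ∈ D | ∀ b ∈ s, b < x} := by
  set X := fun k => (fusionSeq P A k).2
  set a := fun k => sInf (X k)
  have ha_mem (k : ℕ) : a k ∈ X k := Nat.sInf_mem (fusionSeq_spec hA dense anti k).2.1.nonempty
  have hX_anti : Antitone X := antitone_nat_of_succ_le fun k =>
    (fusionSeq_succ_subset hA dense anti k).trans (Set.sep_subset _ _)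
  have ha_mono : StrictMono a := strictMono_nat_of_lt_succ fun k =>
    (fusionSeq_succ_subset hA dense anti k (ha_mem (k + 1))).2
  refine ⟨Set.range a,
    Set.range_subset_iff.mpr fun k => (fusionSeq_spec hA dense anti k).1 (ha_mem k),
    Set.infinite_range_of_injective ha_mono.injective, fun s hs => ?_⟩
  obtain ⟨k, hsk, hk⟩ := ha_mono.exists_subset_image_range hs
  refine anti s ?_ ((fusionSeq_spec hA dense anti k).2.2 s (fusionSeq_fst P A k ▸ hsk))
  rintro _ ⟨⟨j, rfl⟩, hj⟩
  exact hX_anti (hk j hj) (ha_mem j)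

end Diagonal

def IsInitialSegment (t : Finset ℕ) (Y : Set ℕ) : Prop :=
  ↑t ⊆ Y ∧ ∀ b ∈ Y, b ∉ t → ∀ a ∈ t, a < b

section Forcing

variable (G : Set (Finset ℕ))

def Accepts (X : Set ℕ) (s : Finset ℕ) : Prop :=
  ∀ Z ⊆ X, Z.Infinite → (∀ b ∈ s, ∀ n ∈ Z, b < n) → ∃ t ∈ G, IsInitialSegment t (↑s ∪ Z)

def Rejects (X : Set ℕ) (s : Finset ℕ) : Prop :=
  ∀ Y ⊆ X, Y.Infinite → ¬ Accepts G Y s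

def Decides (X : Set ℕ) (s : Finset ℕ) : Prop :=
  Accepts G X s ∨ Rejects G X s

variable {G} {X Y : Set ℕ} {s : Finset ℕ}

lemma Accepts.mono (h : Accepts G X s) (hYX : Y ⊆ X) : Accepts G Y s :=
  fun Z hZY => h Z (hZY.trans hYX)

lemma Rejects.mono (h : Rejects G X s) (hYX : Y ⊆ X) : Rejects G Y s :=
  fun Z hZY => h Z (hZY.trans hYX)

lemma antitone_decides (s : Finset ℕ) : Antitone fun X => Decides G X s :=
  fun _ _ hYX h => h.imp (·.mono hYX) (·.mono hYX)

lemma exists_decides (hX : X.Infinite) (s : Finset ℕ) : ∃ Y ⊆ X, Y.Infinite ∧ Decides G Y s := by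
  by_cases h : Rejects G X s
  · exact ⟨X, subset_rfl, hX, Or.inr h⟩
  · simp only [Rejects, not_forall, not_not] at h
    obtain ⟨Y, hYX, hY, hacc⟩ := h
    exact ⟨Y, hYX, hY, Or.inl hacc⟩

lemma Decides.of_sep_forall_lt (h : Decides G {x ∈ X | ∀ b ∈ s, b < x} s) : Decides G X s := by
  rcases h with hacc | hrej
  · exact Or.inl fun Z hZX hZ hsZ =>
      hacc Z (fun n hn => ⟨hZX hn, fun b hb => hsZ b hb n hn⟩) hZ hsZ
  · exact Or.inr fun Y hYX hY hacc =>
      hrej {y ∈ Y | ∀ b ∈ s, b < y} (fun y hy => ⟨hYX hy.1, hy.2⟩)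
        (infinite_sep_forall_lt hY s) (hacc.mono (Set.sep_subset _ _))

lemma accepts_of_mem (hs : s ∈ G) : Accepts G X s :=
  fun _ _ _ hsZ => ⟨s, hs, Set.subset_union_left, fun b hb hbs a ha =>
    hb.elim (absurd · hbs) (hsZ a ha b)⟩

/-- With `n` the least element of `Z`, `s ∪ Z = insert n s ∪ (Z \ {n})`. -/
lemma accepts_of_forall_accepts_insert (h : ∀ n ∈ X, Accepts G X (insert n s)) : Accepts G X s := by
  intro Z hZX hZ hsZ
  set n := sInf Z
  have hnZ : n ∈ Z := Nat.sInf_mem hZ.nonempty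
  have hnZ' : ∀ b ∈ insert n s, ∀ m ∈ Z \ {n}, b < m := by
    intro b hb m hm
    rcases Finset.mem_insert.mp hb with rfl | hb
    · exact (Nat.sInf_le hm.1).lt_of_ne (Ne.symm hm.2)
    · exact hsZ b hb m hm.1
  obtain ⟨t, htG, ht⟩ := h n (hZX hnZ) (Z \ {n}) (Set.sdiff_subset.trans hZX)
    (hZ.sdiff (Set.finite_singleton n)) hnZ'
  refine ⟨t, htG, ?_⟩
  convert ht using 1
  ext x
  simp only [Finset.coe_insert, Set.mem_union, Set.mem_insert_iff, Finset.mem_coe, Set.mem_sdiff,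
    Set.mem_singleton_iff]
  by_cases hx : x = n <;> simp [hx, hnZ]

lemma Rejects.exists_forall_rejects_insert (hs : Rejects G X s)
    (hdec : ∀ n ∈ X, Decides G X (insert n s)) :
    ∃ N, ∀ n ∈ X, N < n → Rejects G X (insert n s) := by
  have hfin : {n ∈ X | Accepts G X (insert n s)}.Finite := by
    by_contra hinf
    exact hs _ (Set.sep_subset _ _) hinf
      (accepts_of_forall_accepts_insert fun n hn => hn.2.mono (Set.sep_subset _ _))
  obtain ⟨N, hN⟩ := hfin.bddAbove
  exact ⟨N, fun n hn hNn => (hdec n hn).resolve_left fun hacc => (hN ⟨hn, hacc⟩).not_gt hNn⟩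

theorem exists_forall_decides {A : Set ℕ} (hA : A.Infinite) :
    ∃ D ⊆ A, D.Infinite ∧ ∀ s : Finset ℕ, ↑s ⊆ D → Decides G D s := by
  obtain ⟨D, hDA, hD, hdec⟩ := exists_infinite_subset_forall_finset hA
    (fun s X _ hX => exists_decides hX s) antitone_decides
  exact ⟨D, hDA, hD, fun s hs => (hdec s hs).of_sep_forall_lt⟩

theorem exists_forall_rejects {D : Set ℕ} (hD : D.Infinite)
    (hdec : ∀ s : Finset ℕ, ↑s ⊆ D → Decides G D s) (h0 : Rejects G D ∅) :
    ∃ E ⊆ D, E.Infinite ∧ ∀ s : Finset ℕ, ↑s ⊆ E → Rejects G D s := by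
  classical
  let P (s : Finset ℕ) (Y : Set ℕ) : Prop :=
    ↑s ⊆ D → Rejects G D s → ∀ n ∈ Y, Rejects G D (insert n s)
  have dense (s : Finset ℕ) (X : Set ℕ) (hXD : X ⊆ D) (hX : X.Infinite) :
      ∃ Y ⊆ X, Y.Infinite ∧ P s Y := by
    by_cases hs : ↑s ⊆ D ∧ Rejects G D s
    · obtain ⟨N, hN⟩ := hs.2.exists_forall_rejects_insert fun n hn =>
        hdec _ (by simpa using Set.insert_subset hn hs.1)
      exact ⟨_, Set.sep_subset _ _, infinite_sep_lt hX N,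
        fun _ _ n hn => hN n (hXD hn.1) hn.2⟩
    · exact ⟨X, subset_rfl, hX, fun hsD hrej => absurd ⟨hsD, hrej⟩ hs⟩
  obtain ⟨E, hED, hE, hPE⟩ := exists_infinite_subset_forall_finset hD dense
    fun s _ _ hYX hP hsD hrej n hn => hP hsD hrej n (hYX hn)
  refine ⟨E, hED, hE, fun s => ?_⟩
  induction s using Finset.induction_on_max with
  | empty => exact fun _ => h0
  | insert a s has ih =>
    intro hs
    rw [Finset.coe_insert, Set.insert_subset_iff] at hs
    exact hPE s hs.2 (hs.2.trans hED) (ih hs.2) a ⟨hs.1, has⟩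

end Forcing

theorem exists_subset_avoids_or_forall_isInitialSegment (G : Set (Finset ℕ)) {A : Set ℕ}
    (hA : A.Infinite) : ∃ B ⊆ A, B.Infinite ∧
      ((∀ S ∈ G, ¬ ↑S ⊆ B) ∨ ∀ Z ⊆ B, Z.Infinite → ∃ t ∈ G, IsInitialSegment t Z) := by
  by_cases hacc : ∃ B ⊆ A, B.Infinite ∧ Accepts G B ∅
  · obtain ⟨B, hBA, hB, hacc⟩ := hacc
    exact ⟨B, hBA, hB, Or.inr fun Z hZB hZ => by simpa using hacc Z hZB hZ (by simp)⟩
  have hrej : Rejects G A ∅ := fun B hBA hB hB' => hacc ⟨B, hBA, hB, hB'⟩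
  obtain ⟨D, hDA, hD, hdec⟩ := exists_forall_decides (G := G) hA
  obtain ⟨E, hED, hE, hErej⟩ := exists_forall_rejects hD hdec (hrej.mono hDA)
  exact ⟨E, hED.trans hDA, hE, Or.inl fun S hS hSE =>
    hErej S hSE D subset_rfl hD (accepts_of_mem hS)⟩

lemma IsInitialSegment.initSeg_or_initSeg {S t : Finset ℕ} {Y : Set ℕ}
    (hS : IsInitialSegment S Y) (ht : IsInitialSegment t Y) : InitSeg S t ∨ InitSeg t S := by
  classical
  have initSeg_of_subset {S t : Finset ℕ} (hS : IsInitialSegment S Y) (ht : IsInitialSegment t Y)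
      (hSt : S ⊆ t) : InitSeg S t :=
    ⟨t \ S, (Finset.union_sdiff_of_subset hSt).symm, fun a ha b hb =>
      hS.2 b (ht.1 (Finset.mem_sdiff.mp hb).1) (Finset.mem_sdiff.mp hb).2 a ha⟩
  by_cases hSt : S ⊆ t
  · exact Or.inl (initSeg_of_subset hS ht hSt)
  by_cases htS : t ⊆ S
  · exact Or.inr (initSeg_of_subset ht hS htS)
  obtain ⟨x, hxS, hxt⟩ := Finset.not_subset.mp hSt
  obtain ⟨y, hyt, hyS⟩ := Finset.not_subset.mp htS
  exact absurd (hS.2 y (ht.1 hyt) hyS x hxS) (ht.2 x (hS.1 hxS) hxt y hyt).not_gt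

lemma _root_.ThinFam.eq_of_isInitialSegment {F : Set (Finset ℕ)} (hF : ThinFam F)
    {S t : Finset ℕ} (hS : S ∈ F) (ht : t ∈ F) {Y : Set ℕ} (hSY : IsInitialSegment S Y)
    (htY : IsInitialSegment t Y) : S = t :=
  (hSY.initSeg_or_initSeg htY).elim (hF S hS t ht) fun h => (hF t ht S hS h).symm

lemma exists_isInitialSegment {B : Set ℕ} (hB : B.Infinite) {S : Finset ℕ} (hSB : ↑S ⊆ B) :
    ∃ Z ⊆ B, Z.Infinite ∧ IsInitialSegment S Z :=
  ⟨↑S ∪ {x ∈ B | ∀ b ∈ S, b < x}, Set.union_subset hSB (Set.sep_subset _ _),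
    (infinite_sep_forall_lt hB S).mono Set.subset_union_right, Set.subset_union_left,
    fun _ hb hbS a ha => hb.elim (absurd · hbS) (·.2 a ha)⟩

end NashWilliams

open NashWilliams in
/-- Nash-Williams partition theorem (2 colours). -/
theorem nash_williams_two (A : Set ℕ) (hA : A.Infinite) (F : Set (Finset ℕ))
    (hF : ThinFam F) (c : Finset ℕ → Fin 2) :
    ∃ i : Fin 2, ∃ A' ⊆ A, A'.Infinite ∧
      ∀ S ∈ F, (S : Set ℕ) ⊆ A' → c S = i := by
  obtain ⟨B, hBA, hB, havoid | hfront⟩ :=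
    exists_subset_avoids_or_forall_isInitialSegment {S ∈ F | c S = 0} hA
  · exact ⟨1, B, hBA, hB, fun S hS hSB => Fin.eq_one_of_ne_zero _ fun h => havoid S ⟨hS, h⟩ hSB⟩
  · refine ⟨0, B, hBA, hB, fun S hS hSB => ?_⟩
    obtain ⟨Z, hZB, hZ, hSZ⟩ := exists_isInitialSegment hB hSB
    obtain ⟨t, ⟨ht, htc⟩, htZ⟩ := hfront Z hZB hZ
    rwa [hF.eq_of_isInitialSegment hS ht hSZ htZ]
end

section
/- (Nash-Williams partition theorem, r colours) Let 𝓕 be a thin family of finite subsets of ℕ and r > 0. For every f : 𝓕 → {0,…,r−1} and every infinite M ⊆ ℕ, there exist an infinite N ⊆ M and i < r such that for all j < r with j ≠ i, no element of 𝓕 coloured j is a subset of N. -/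
/-!
Combinatorial forcing in the style of Galvin–Prikry. For a family `A`, an infinite set `X`
*accepts* `s` if every infinite `Z ⊆ X` has an initial segment `y` with `s ∪ y ∈ A`, and
*rejects* `s` if no infinite subset of `X` accepts `s`. A diagonal fusion gives an infinite
`Y ⊆ M` whose tail above `s` decides every finite `s ⊆ Y`. If `Y` rejects `∅`, then for each
rejected `s` only finitely many one-point extensions `s ∪ {m}` are accepted (otherwise those `m`
would form a set accepting `s`), and a second fusion gives an infinite `Z ⊆ Y` all of whose
finite subsets are rejected; then no member of `A` lies in `Z`. If instead `Y` accepts `∅` and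
`A` is a subfamily of a thin family `F`, every `S ∈ F` inside `Y` is in `A`: the set
`S ∪ (Y above S)` has `S` and some member of `A` as initial segments, and these are comparable.
Induction on the number of colours finishes the proof.
-/

open Set

def tailAbove (Y : Set ℕ) (s : Finset ℕ) : Set ℕ := {y ∈ Y | ∀ a ∈ s, a < y}

lemma tailAbove_subset (Y : Set ℕ) (s : Finset ℕ) : tailAbove Y s ⊆ Y := fun _ hy => hy.1

@[simp] lemma tailAbove_empty (Y : Set ℕ) : tailAbove Y ∅ = Y := by simp [tailAbove]

lemma Set.Infinite.inter_Ioi {Y : Set ℕ} (hY : Y.Infinite) (n : ℕ) :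
    (Y ∩ Ioi n).Infinite := by
  simpa [sdiff_eq, compl_Iic] using hY.sdiff (finite_Iic n)

lemma Set.Infinite.tailAbove {Y : Set ℕ} (hY : Y.Infinite) (s : Finset ℕ) :
    (tailAbove Y s).Infinite :=
  (hY.inter_Ioi (s.sup id)).mono fun _ hy =>
    ⟨hy.1, fun _ ha => (Finset.le_sup (f := id) ha).trans_lt hy.2⟩

section Fusion

variable {P : Finset ℕ → Set ℕ → Prop}

lemma exists_infinite_subset_forall_mem (hP : ∀ s, Antitone (P s))
    (hdense : ∀ s X, X.Infinite → ∃ Y ⊆ X, Y.Infinite ∧ P s Y)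
    (𝒮 : Finset (Finset ℕ)) {X : Set ℕ} (hX : X.Infinite) :
    ∃ Y ⊆ X, Y.Infinite ∧ ∀ s ∈ 𝒮, P s Y := by
  induction 𝒮 using Finset.induction generalizing X with
  | empty => exact ⟨X, subset_rfl, hX, by simp⟩
  | insert s 𝒮 _ ih =>
    obtain ⟨Y, hYX, hY, hY𝒮⟩ := ih hX
    obtain ⟨W, hWY, hW, hWs⟩ := hdense s Y hY
    refine ⟨W, hWY.trans hYX, hW, Finset.forall_mem_insert _ _ _ |>.2 ⟨hWs, ?_⟩⟩
    exact fun t ht => hP t hWY (hY𝒮 t ht)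

lemma exists_fusion_step (hP : ∀ s, Antitone (P s))
    (hdense : ∀ s X, X.Infinite → ∃ Y ⊆ X, Y.Infinite ∧ P s Y) (F : Finset ℕ)
    {X : Set ℕ} (hX : X.Infinite) :
    ∃ m ∈ X, ∃ X' ⊆ X ∩ Ioi m, X'.Infinite ∧ ∀ s ⊆ insert m F, P s X' := by
  obtain ⟨m, hm⟩ := hX.nonempty
  obtain ⟨X', hX'X, hX', hPX'⟩ :=
    exists_infinite_subset_forall_mem hP hdense (insert m F).powerset (hX.inter_Ioi m)
  exact ⟨m, hm, X', hX'X, hX', fun s hs => hPX' s (Finset.mem_powerset.2 hs)⟩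

lemma StrictMono.exists_subset_image_and_tailAbove_subset {n : ℕ → ℕ} (hn : StrictMono n)
    {s : Finset ℕ} (hs : ↑s ⊆ range n) :
    ∃ k, s ⊆ (Finset.range k).image n ∧ tailAbove (range n) s ⊆ n '' Ici k := by
  rcases s.eq_empty_or_nonempty with rfl | hne
  · exact ⟨0, by simp, by rintro _ ⟨⟨i, rfl⟩, -⟩; exact ⟨i, Nat.zero_le i, rfl⟩⟩
  obtain ⟨j, hj⟩ := hs (s.max'_mem hne)
  refine ⟨j + 1, fun a ha => ?_, ?_⟩
  · obtain ⟨i, rfl⟩ := hs ha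
    have : n i ≤ n j := hj ▸ s.le_max' _ ha
    simpa [Nat.lt_succ_iff] using ⟨i, hn.le_iff_le.1 this, rfl⟩
  · rintro _ ⟨⟨i, rfl⟩, hi⟩
    exact ⟨i, hn.lt_iff_lt.1 (hj ▸ hi _ (s.max'_mem hne)), rfl⟩

theorem exists_infinite_subset_forall_tailAbove (hP : ∀ s, Antitone (P s))
    (hdense : ∀ s X, X.Infinite → ∃ Y ⊆ X, Y.Infinite ∧ P s Y) {X : Set ℕ}
    (hX : X.Infinite) :
    ∃ Y ⊆ X, Y.Infinite ∧ ∀ s : Finset ℕ, ↑s ⊆ Y → P s (tailAbove Y s) := by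
  choose! pt hpt nxt hnxt hnxt_inf hnxt_P using
    fun F (X : Set ℕ) (hX : X.Infinite) => exists_fusion_step hP hdense F hX
  obtain ⟨X₀, hX₀X, hX₀, hPX₀⟩ := hdense ∅ X hX
  let st : ℕ → Finset ℕ × Set ℕ := fun k =>
    Nat.rec (∅, X₀) (fun _ p => (insert (pt p.1 p.2) p.1, nxt p.1 p.2)) k
  let n k := pt (st k).1 (st k).2
  have hinv : ∀ k, (st k).2.Infinite ∧ ∀ s ⊆ (st k).1, P s (st k).2 := by
    intro k
    induction k with
    | zero => exact ⟨hX₀, fun s hs => Finset.subset_empty.1 hs ▸ hPX₀⟩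
    | succ k ih => exact ⟨hnxt_inf _ _ ih.1, hnxt_P _ _ ih.1⟩
  have hn_mem k : n k ∈ (st k).2 := hpt _ _ (hinv k).1
  have hst_succ k : (st (k + 1)).2 ⊆ (st k).2 ∩ Ioi (n k) := hnxt _ _ (hinv k).1
  have hst_anti : Antitone fun k => (st k).2 :=
    antitone_nat_of_succ_le fun k => (hst_succ k).trans inter_subset_left
  have hn : StrictMono n := strictMono_nat_of_lt_succ fun k => (hst_succ k (hn_mem (k + 1))).2
  have hst_fst k : (st k).1 = (Finset.range k).image n := by
    induction k with
    | zero => rfl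
    | succ k ih => rw [Finset.range_add_one, Finset.image_insert, ← ih]
  have htail k : n '' Ici k ⊆ (st k).2 := by
    rintro _ ⟨j, hj, rfl⟩
    exact hst_anti hj (hn_mem j)
  refine ⟨range n, ?_, infinite_range_of_injective hn.injective, fun s hs => ?_⟩
  · rintro _ ⟨k, rfl⟩
    exact hX₀X (hst_anti (Nat.zero_le k) (hn_mem k))
  obtain ⟨k, hsk, hks⟩ := hn.exists_subset_image_and_tailAbove_subset hs
  exact hP s (hks.trans (htail k)) ((hinv k).2 s (hst_fst k ▸ hsk))

end Fusion

def IsInitialSeg (y : Finset ℕ) (Z : Set ℕ) : Prop :=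
  ↑y ⊆ Z ∧ ∀ b ∈ Z, b ∉ y → ∀ a ∈ y, a < b

lemma isInitialSeg_empty (Z : Set ℕ) : IsInitialSeg ∅ Z := by simp [IsInitialSeg]

lemma IsInitialSeg.insert_min {y : Finset ℕ} {Z : Set ℕ} {n : ℕ} (hnZ : n ∈ Z)
    (hn : ∀ b ∈ Z, n ≤ b) (hy : IsInitialSeg y (Z ∩ Ioi n)) :
    IsInitialSeg (insert n y) Z := by
  refine ⟨?_, fun b hbZ hby a ha => ?_⟩
  · rw [Finset.coe_insert]
    exact insert_subset hnZ (hy.1.trans inter_subset_left)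
  have hbn : n < b := (hn b hbZ).lt_of_ne fun h => hby (h ▸ Finset.mem_insert_self n y)
  rcases Finset.mem_insert.1 ha with rfl | ha
  · exact hbn
  · exact hy.2 b ⟨hbZ, hbn⟩ (fun h => hby (Finset.mem_insert_of_mem h)) a ha

lemma isInitialSeg_union_tailAbove (S : Finset ℕ) (N : Set ℕ) :
    IsInitialSeg S (↑S ∪ tailAbove N S) :=
  ⟨subset_union_left, fun _ hb hbS => (hb.resolve_left hbS).2⟩

lemma IsInitialSeg.initSeg_of_subset {S T : Finset ℕ} {Z : Set ℕ} (hS : IsInitialSeg S Z)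
    (hT : IsInitialSeg T Z) (hST : S ⊆ T) : InitSeg S T :=
  ⟨T \ S, (Finset.union_sdiff_of_subset hST).symm, fun a ha b hb =>
    hS.2 b (hT.1 (Finset.mem_sdiff.1 hb).1) (Finset.mem_sdiff.1 hb).2 a ha⟩

lemma IsInitialSeg.initSeg_or_initSeg {S T : Finset ℕ} {Z : Set ℕ} (hS : IsInitialSeg S Z)
    (hT : IsInitialSeg T Z) : InitSeg S T ∨ InitSeg T S := by
  by_cases hST : S ⊆ T
  · exact Or.inl (hS.initSeg_of_subset hT hST)
  refine Or.inr (hT.initSeg_of_subset hS fun b hbT => ?_)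
  obtain ⟨a, haS, haT⟩ := Finset.not_subset.1 hST
  by_contra hbS
  exact (hS.2 b (hT.1 hbT) hbS a haS).asymm (hT.2 a (hS.1 haS) haT b hbT)

section Forcing

variable {A : Set (Finset ℕ)}

def Accepts (A : Set (Finset ℕ)) (s : Finset ℕ) (X : Set ℕ) : Prop :=
  ∀ Z ⊆ X, Z.Infinite → ∃ y, IsInitialSeg y Z ∧ s ∪ y ∈ A

def Rejects (A : Set (Finset ℕ)) (s : Finset ℕ) (X : Set ℕ) : Prop :=
  ∀ Y ⊆ X, Y.Infinite → ¬ Accepts A s Y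

def DecidesAll (A : Set (Finset ℕ)) (Y : Set ℕ) : Prop :=
  ∀ s : Finset ℕ, ↑s ⊆ Y → Accepts A s (tailAbove Y s) ∨ Rejects A s (tailAbove Y s)

lemma accepts_antitone (A : Set (Finset ℕ)) (s : Finset ℕ) : Antitone (Accepts A s) :=
  fun _ _ hYX hX Z hZY => hX Z (hZY.trans hYX)

lemma rejects_antitone (A : Set (Finset ℕ)) (s : Finset ℕ) : Antitone (Rejects A s) :=
  fun _ _ hYX hX Z hZY => hX Z (hZY.trans hYX)

lemma accepts_of_mem {s : Finset ℕ} (hs : s ∈ A) (X : Set ℕ) : Accepts A s X :=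
  fun Z _ _ => ⟨∅, isInitialSeg_empty Z, by simpa⟩

lemma accepts_of_forall_accepts_insert {s : Finset ℕ} {Y : Set ℕ}
    (h : ∀ n ∈ Y, Accepts A (insert n s) (Y ∩ Ioi n)) : Accepts A s Y := by
  intro Z hZY hZ
  have hnZ : sInf Z ∈ Z := Nat.sInf_mem hZ.nonempty
  obtain ⟨y, hy, hyA⟩ := h _ (hZY hnZ) (Z ∩ Ioi (sInf Z)) (inter_subset_inter_left _ hZY)
    (hZ.inter_Ioi _)
  refine ⟨insert (sInf Z) y, hy.insert_min hnZ fun b hb => Nat.sInf_le hb, ?_⟩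
  rwa [Finset.union_insert, ← Finset.insert_union]

lemma exists_accepts_or_rejects (A : Set (Finset ℕ)) (s : Finset ℕ) {X : Set ℕ}
    (hX : X.Infinite) : ∃ Y ⊆ X, Y.Infinite ∧ (Accepts A s Y ∨ Rejects A s Y) := by
  by_cases h : ∃ Y ⊆ X, Y.Infinite ∧ Accepts A s Y
  · obtain ⟨Y, hYX, hY, hacc⟩ := h
    exact ⟨Y, hYX, hY, Or.inl hacc⟩
  · exact ⟨X, subset_rfl, hX, Or.inr fun Y hYX hY hacc => h ⟨Y, hYX, hY, hacc⟩⟩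

lemma exists_decidesAll (A : Set (Finset ℕ)) {X : Set ℕ} (hX : X.Infinite) :
    ∃ Y ⊆ X, Y.Infinite ∧ DecidesAll A Y :=
  exists_infinite_subset_forall_tailAbove
    (fun s _ _ h => Or.imp (accepts_antitone A s h) (rejects_antitone A s h))
    (fun s _ hX => exists_accepts_or_rejects A s hX) hX

lemma DecidesAll.finite_setOf_not_rejects_insert {Y : Set ℕ} (hY : DecidesAll A Y)
    {s : Finset ℕ} (hs : ↑s ⊆ Y) (hrej : Rejects A s (tailAbove Y s)) :
    {m ∈ tailAbove Y s | ¬ Rejects A (insert m s) (tailAbove Y (insert m s))}.Finite := by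
  refine not_infinite.1 fun hB => hrej _ (sep_subset _ _) hB ?_
  refine accepts_of_forall_accepts_insert fun m hm => ?_
  have hms : ↑(insert m s) ⊆ Y := by
    rw [Finset.coe_insert]
    exact insert_subset hm.1.1 hs
  refine accepts_antitone A _ (fun b hb => ?_) ((hY _ hms).resolve_right hm.2)
  exact ⟨hb.1.1.1, Finset.forall_mem_insert _ _ _ |>.2 ⟨hb.2, hb.1.1.2⟩⟩

lemma DecidesAll.exists_forall_rejects {Y : Set ℕ} (hY : DecidesAll A Y) (hYinf : Y.Infinite)
    (h₀ : Rejects A ∅ Y) :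
    ∃ Z ⊆ Y, Z.Infinite ∧ ∀ s : Finset ℕ, ↑s ⊆ Z → Rejects A s (tailAbove Y s) := by
  let P (s : Finset ℕ) (X : Set ℕ) : Prop := ↑s ⊆ Y → Rejects A s (tailAbove Y s) →
    ∀ m ∈ X ∩ tailAbove Y s, Rejects A (insert m s) (tailAbove Y (insert m s))
  have hP_anti s : Antitone (P s) := fun _ _ hX'X hP hs hrej m hm =>
    hP hs hrej m ⟨hX'X hm.1, hm.2⟩
  have hP_dense s (X : Set ℕ) (hX : X.Infinite) : ∃ X' ⊆ X, X'.Infinite ∧ P s X' := by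
    by_cases hsrej : ↑s ⊆ Y ∧ Rejects A s (tailAbove Y s)
    · have hB := hY.finite_setOf_not_rejects_insert hsrej.1 hsrej.2
      refine ⟨X \ _, sdiff_subset, hX.sdiff hB, fun _ _ m hm => ?_⟩
      by_contra hm'
      exact hm.1.2 ⟨hm.2, hm'⟩
    · exact ⟨X, subset_rfl, hX, fun hs hrej => absurd ⟨hs, hrej⟩ hsrej⟩
  obtain ⟨Z, hZY, hZ, hPZ⟩ := exists_infinite_subset_forall_tailAbove hP_anti hP_dense hYinf
  refine ⟨Z, hZY, hZ, fun s hs => ?_⟩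
  induction s using Finset.induction_on_max with
  | empty => simpa using h₀
  | insert a t hta ih =>
    rw [Finset.coe_insert, insert_subset_iff] at hs
    exact hPZ t hs.2 (hs.2.trans hZY) (ih hs.2) a ⟨⟨hs.1, hta⟩, hZY hs.1, hta⟩

end Forcing

theorem exists_accepts_or_forall_not_subset (A : Set (Finset ℕ)) {M : Set ℕ}
    (hM : M.Infinite) :
    ∃ N ⊆ M, N.Infinite ∧ (Accepts A ∅ N ∨ ∀ S ∈ A, ¬ ↑S ⊆ N) := by
  obtain ⟨Y, hYM, hY, hdec⟩ := exists_decidesAll A hM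
  have hdec₀ := hdec ∅ (by simp)
  rw [tailAbove_empty] at hdec₀
  rcases hdec₀ with hacc | hrej
  · exact ⟨Y, hYM, hY, Or.inl hacc⟩
  obtain ⟨Z, hZY, hZ, hZrej⟩ := hdec.exists_forall_rejects hY hrej
  exact ⟨Z, hZY.trans hYM, hZ, Or.inr fun S hS hSZ =>
    hZrej S hSZ _ subset_rfl (hY.tailAbove S) (accepts_of_mem hS _)⟩

namespace ThinFam

variable {F : Set (Finset ℕ)}

lemma mem_of_accepts (hF : ThinFam F) {A : Set (Finset ℕ)} (hAF : A ⊆ F) {N : Set ℕ}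
    (hN : N.Infinite) (hacc : Accepts A ∅ N) {S : Finset ℕ} (hS : S ∈ F) (hSN : ↑S ⊆ N) :
    S ∈ A := by
  obtain ⟨y, hy, hyA⟩ := hacc _ (union_subset hSN (tailAbove_subset N S))
    ((hN.tailAbove S).mono subset_union_right)
  rw [Finset.empty_union] at hyA
  rcases (isInitialSeg_union_tailAbove S N).initSeg_or_initSeg hy with h | h
  · rwa [hF S hS y (hAF hyA) h]
  · rwa [← hF y (hAF hyA) S hS h]

lemma exists_forall_or_forall_not (hF : ThinFam F) (p : Finset ℕ → Prop) {M : Set ℕ}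
    (hM : M.Infinite) : ∃ N ⊆ M, N.Infinite ∧
      ((∀ S ∈ F, ↑S ⊆ N → p S) ∨ ∀ S ∈ F, ↑S ⊆ N → ¬ p S) := by
  obtain ⟨N, hNM, hN, hacc | hnot⟩ := exists_accepts_or_forall_not_subset {S ∈ F | p S} hM
  · exact ⟨N, hNM, hN, Or.inl fun S hS hSN =>
      (hF.mem_of_accepts (sep_subset _ _) hN hacc hS hSN).2⟩
  · exact ⟨N, hNM, hN, Or.inr fun S hS hSN hp => hnot S ⟨hS, hp⟩ hSN⟩

lemma exists_color_eq_of_le (hF : ThinFam F) (f : Finset ℕ → ℕ) (r : ℕ) {M : Set ℕ}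
    (hM : M.Infinite) :
    ∃ N ⊆ M, N.Infinite ∧ ∃ i ≤ r, ∀ S ∈ F, ↑S ⊆ N → f S ≤ r → f S = i := by
  induction r generalizing M with
  | zero => exact ⟨M, subset_rfl, hM, 0, le_rfl, fun S _ _ => Nat.le_zero.1⟩
  | succ r ih =>
    obtain ⟨N, hNM, hN, i, hir, hi⟩ := ih hM
    obtain ⟨N', hN'N, hN', hall | hnone⟩ := hF.exists_forall_or_forall_not (f · = r + 1) hN
    · exact ⟨N', hN'N.trans hNM, hN', r + 1, le_rfl, fun S hS hSN _ => hall S hS hSN⟩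
    · refine ⟨N', hN'N.trans hNM, hN', i, hir.trans r.le_succ, fun S hS hSN hSr => ?_⟩
      exact hi S hS (hSN.trans hN'N) (Nat.le_of_lt_succ (hSr.lt_of_ne (hnone S hS hSN)))

end ThinFam

theorem nash_williams_general (F : Set (Finset ℕ)) (hF : ThinFam F) (r : ℕ) (hr : 0 < r)
    (f : Finset ℕ → ℕ) (M : Set ℕ) (hM : M.Infinite) :
    ∃ N ⊆ M, N.Infinite ∧ ∃ i < r, ∀ j < r, j ≠ i →
      ∀ S ∈ F, f S = j → ¬ (S : Set ℕ) ⊆ N := by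
  obtain ⟨N, hNM, hN, i, hi, hcol⟩ := hF.exists_color_eq_of_le f (r - 1) hM
  refine ⟨N, hNM, hN, i, by omega, fun j hj hji S hS hSj hSN => hji ?_⟩
  exact hSj ▸ hcol S hS hSN (by omega)

/-- Nash-Williams partition theorem (r colours). -/
theorem nash_williams (F : Set (Finset ℕ)) (hF : ThinFam F) (r : ℕ) (hr : 0 < r)
    (f : Finset ℕ → ℕ) (hf : ∀ S ∈ F, f S < r) (M : Set ℕ) (hM : M.Infinite) :
    ∃ N ⊆ M, N.Infinite ∧ ∃ i < r, ∀ j < r, j ≠ i →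
      ∀ S ∈ F, f S = j → ¬ (S : Set ℕ) ⊆ N :=
  nash_williams_general F hF r hr f M hM
end

section
/- Let 𝓕 be a front on ℕ with ∅ ∉ 𝓕, and for n ∈ ℕ let 𝓕ₙ = { s ⊆ ℕ ∖ (n+1) : {n} ∪ s ∈ 𝓕 }. Then 𝓕ₙ is a front on ℕ ∖ (n+1), and the map s ↦ s ∖ {n} is an order isomorphism from Tₙ = { s ∈ T(𝓕) : min s = n } onto T(𝓕ₙ), both ordered by the initial-segment relation. -/
/-- `s` is an initial segment of the increasing enumeration of the set `X`. -/
def InitSegSet (s : Finset ℕ) (X : Set ℕ) : Prop :=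
  (s : Set ℕ) ⊆ X ∧ ∀ b ∈ X, ∀ a ∈ s, b ≤ a → b ∈ s

/-- `F` is a front on the infinite set `A`. -/
def Front (F : Set (Finset ℕ)) (A : Set ℕ) : Prop :=
  (∀ S ∈ F, (S : Set ℕ) ⊆ A) ∧ ThinFam F ∧
    ∀ X ⊆ A, X.Infinite → ∃ s ∈ F, InitSegSet s X

/-- The tree of initial segments of members of `F`. -/
def TreeOf (F : Set (Finset ℕ)) : Set (Finset ℕ) :=
  {s | ∃ t ∈ F, InitSeg s t}

/-- The derived family `Fₙ = { s ⊆ ℕ ∖ (n+1) : {n} ∪ s ∈ F }`. -/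
def DerivedFam (F : Set (Finset ℕ)) (n : ℕ) : Set (Finset ℕ) :=
  {s | (∀ a ∈ s, n < a) ∧ insert n s ∈ F}

lemma initSeg_subset {s t : Finset ℕ} (h : InitSeg s t) : s ⊆ t := by
  obtain ⟨S2, rfl, _⟩ := h; exact Finset.subset_union_left

/-- If `F` is a nontrivial front on `ℕ`, then `Fₙ` is a front on `ℕ ∖ (n+1)` and
`s ↦ s ∖ {n}` is an order isomorphism from `Tₙ = {s ∈ T(F) : min s = n}` onto `T(Fₙ)`,
both ordered by the initial-segment relation. -/
theorem derived_front_and_tree_iso (F : Set (Finset ℕ)) (hF : Front F Set.univ)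
    (hne : (∅ : Finset ℕ) ∉ F) (n : ℕ) :
    Front (DerivedFam F n) {m | n < m} ∧
    Set.BijOn (fun s => s.erase n)
      {s ∈ TreeOf F | n ∈ s ∧ ∀ a ∈ s, n ≤ a} (TreeOf (DerivedFam F n)) ∧
    (∀ s ∈ {s ∈ TreeOf F | n ∈ s ∧ ∀ a ∈ s, n ≤ a},
      ∀ t ∈ {s ∈ TreeOf F | n ∈ s ∧ ∀ a ∈ s, n ≤ a},
        (InitSeg s t ↔ InitSeg (s.erase n) (t.erase n))) := by
  obtain ⟨hsub, hthin, hcov⟩ := hF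
  refine ⟨⟨?_, ?_, ?_⟩, ⟨?_, ?_, ?_⟩, ?_⟩
  · -- members of Fₙ lie in {m | n < m}
    intro s hs a ha
    exact hs.1 a ha
  · -- thin
    rintro s ⟨hs1, hs2⟩ t ⟨ht1, ht2⟩ ⟨S2, rfl, hlt⟩
    have key : insert n s = insert n (s ∪ S2) := by
      apply hthin _ hs2 _ ht2
      refine ⟨S2, ?_, ?_⟩
      · rw [Finset.insert_union]
      · intro a ha b hb
        rcases Finset.mem_insert.mp ha with rfl | ha'
        · exact ht1 b (Finset.mem_union_right _ hb)
        · exact hlt a ha' b hb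
    have hns : n ∉ s := fun h => lt_irrefl n (hs1 n h)
    have hnt : n ∉ s ∪ S2 := fun h => lt_irrefl n (ht1 n h)
    calc s = (insert n s).erase n := by rw [Finset.erase_insert hns]
      _ = (insert n (s ∪ S2)).erase n := by rw [key]
      _ = s ∪ S2 := Finset.erase_insert hnt
  · -- covering
    intro X hX hXinf
    obtain ⟨t, htF, ht1, ht2⟩ := hcov (insert n X) (Set.subset_univ _)
      (hXinf.mono (Set.subset_insert _ _))
    have htne : t ≠ ∅ := fun h => hne (h ▸ htF)
    obtain ⟨a, ha⟩ := Finset.nonempty_iff_ne_empty.mpr htne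
    have hna : n ≤ a := by
      have := ht1 ha
      rcases this with h | h
      · omega
      · exact le_of_lt (hX h)
    have hnt : n ∈ t := ht2 n (Set.mem_insert _ _) a ha hna
    refine ⟨t.erase n, ⟨?_, ?_⟩, ?_, ?_⟩
    · intro a ha
      have := ht1 (Finset.mem_of_mem_erase ha)
      rcases this with h | h
      · exact absurd h (Finset.ne_of_mem_erase ha)
      · exact hX h
    · rwa [Finset.insert_erase hnt]
    · intro a ha
      have ha' := Finset.mem_coe.mp ha
      have := ht1 (Finset.mem_of_mem_erase ha')
      rcases this with h | h
      · exact absurd h (Finset.ne_of_mem_erase ha')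
      · exact h
    · intro b hb a ha hba
      refine Finset.mem_erase.mpr ⟨?_, ht2 b (Set.mem_insert_of_mem _ hb) a
        (Finset.mem_of_mem_erase ha) hba⟩
      intro h; rw [h] at hb; exact lt_irrefl n (hX hb)
  · -- MapsTo
    rintro s ⟨⟨t, htF, S2, rfl, hlt⟩, hns, hmin⟩
    have hS2 : ∀ b ∈ S2, n < b := fun b hb => hlt n hns b hb
    have hnt : n ∈ s ∪ S2 := Finset.mem_union_left _ hns
    refine ⟨(s ∪ S2).erase n, ⟨?_, ?_⟩, S2, ?_, ?_⟩
    · intro a ha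
      have h1 := Finset.ne_of_mem_erase ha
      rcases Finset.mem_union.mp (Finset.mem_of_mem_erase ha) with h | h
      · exact lt_of_le_of_ne (hmin a h) (Ne.symm h1)
      · exact hS2 a h
    · rwa [Finset.insert_erase hnt]
    · rw [Finset.erase_union_distrib]
      congr 1
      rw [Finset.erase_eq_of_notMem]
      intro h; exact lt_irrefl n (hS2 n h)
    · intro a ha b hb
      exact hlt a (Finset.mem_of_mem_erase ha) b hb
  · -- InjOn
    rintro s ⟨_, hns, _⟩ t ⟨_, hnt, _⟩ h
    simp only at h
    calc s = insert n (s.erase n) := (Finset.insert_erase hns).symm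
      _ = insert n (t.erase n) := by rw [h]
      _ = t := Finset.insert_erase hnt
  · -- SurjOn
    rintro u ⟨v, ⟨hv1, hv2⟩, S2, rfl, hlt⟩
    have hu : ∀ a ∈ u, n < a := fun a ha => hv1 a (Finset.mem_union_left _ ha)
    have hnu : n ∉ u := fun h => lt_irrefl n (hu n h)
    refine ⟨insert n u, ⟨⟨insert n (u ∪ S2), hv2, S2, ?_, ?_⟩, Finset.mem_insert_self _ _,
      ?_⟩, ?_⟩
    · rw [Finset.insert_union]
    · intro a ha b hb
      rcases Finset.mem_insert.mp ha with rfl | ha'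
      · exact hv1 b (Finset.mem_union_right _ hb)
      · exact hlt a ha' b hb
    · intro a ha
      rcases Finset.mem_insert.mp ha with rfl | ha'
      · exact le_refl _
      · exact le_of_lt (hu a ha')
    · simp only
      exact Finset.erase_insert hnu
  · -- order iso
    rintro s ⟨hsT, hns, hsmin⟩ t ⟨htT, hnt, htmin⟩
    constructor
    · rintro ⟨S2, rfl, hlt⟩
      refine ⟨S2, ?_, ?_⟩
      · rw [Finset.erase_union_distrib]
        congr 1
        rw [Finset.erase_eq_of_notMem]
        intro h; exact lt_irrefl n (hlt n hns n h)
      · intro a ha b hb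
        exact hlt a (Finset.mem_of_mem_erase ha) b hb
    · rintro ⟨S2, heq, hlt⟩
      have hS2 : ∀ b ∈ S2, n < b := by
        intro b hb
        have hbt : b ∈ t.erase n := heq ▸ Finset.mem_union_right _ hb
        exact lt_of_le_of_ne (htmin b (Finset.mem_of_mem_erase hbt))
          (Ne.symm (Finset.ne_of_mem_erase hbt))
      refine ⟨S2, ?_, ?_⟩
      · calc t = insert n (t.erase n) := (Finset.insert_erase hnt).symm
          _ = insert n (s.erase n ∪ S2) := by rw [heq]
          _ = insert n (s.erase n) ∪ S2 := by rw [Finset.insert_union]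
          _ = s ∪ S2 := by rw [Finset.insert_erase hns]
      · intro a ha b hb
        rcases eq_or_ne a n with rfl | han
        · exact hS2 b hb
        · exact hlt a (Finset.mem_erase.mpr ⟨han, ha⟩) b hb
end

section
/- (Specker) For every natural number m, ω² → (ω², m)²: every colouring f : [ω²]² → {0,1} either admits a subset of order type ω² all of whose pairs are coloured 0, or an m-element set all of whose pairs are coloured 1. -/
/-- `B` (a set of ordinals) has order type `β`. -/
def HasOtype (B : Set Ordinal) (β : Ordinal) : Prop := Nonempty (B ≃o Set.Iio β)

/-!
Identify `ω²` with `ℕ ×ₗ ℕ` and read `toLex (a, b)` with `a < b` as the interval `[a, b]`. Two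
intervals whose four endpoints are distinct, or which share their left or their right end only,
stand in one of five configurations (disjoint, crossing, nested, same left end, same right end),
each spelled out by a strictly increasing 4-tuple of naturals. Ramsey's theorem for 4-tuples
gives a subsequence `u` of `ℕ` along which the colour of two such intervals depends only on
their configuration. If some configuration has colour 1, `m` intervals pairwise in that
configuration form a 1-clique. Otherwise the copy `(p, q) ↦ [u (2p), u (2p + 2q + 1)]` of `ω²`
is 0-homogeneous: left ends are even-indexed and right ends odd-indexed, so two of its
intervals never touch as `[a, b], [b, c]`, the one configuration without large cliques.
-/

open Ordinal

lemma exists_strictMono_forall_image_Ioi {P : ℕ → Set ℕ → Prop}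
    (hP : ∀ a {T T'}, T' ⊆ T → P a T → P a T')
    (step : ∀ T : Set ℕ, T.Infinite → ∃ a ∈ T, ∃ T' ⊆ T \ Set.Iic a, T'.Infinite ∧ P a T')
    {S : Set ℕ} (hS : S.Infinite) :
    ∃ a : ℕ → ℕ, StrictMono a ∧ (∀ n, a n ∈ S) ∧ ∀ n, P (a n) (a '' Set.Ioi n) := by
  choose head head_mem tail tail_sub tail_infinite head_tail using step
  let T : ℕ → {T : Set ℕ // T.Infinite} := fun n =>
    Nat.rec ⟨S, hS⟩ (fun _ T => ⟨tail T.1 T.2, tail_infinite T.1 T.2⟩) n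
  let a n := head (T n).1 (T n).2
  have hT_succ : ∀ n, (T (n + 1)).1 ⊆ (T n).1 \ Set.Iic (a n) := fun n => tail_sub _ _
  have hT_anti : Antitone fun n => (T n).1 :=
    antitone_nat_of_succ_le fun n => (hT_succ n).trans Set.sdiff_subset
  have ha_mem : ∀ n, a n ∈ (T n).1 := fun n => head_mem _ _
  have ha_mem_succ : ∀ n m, n < m → a m ∈ (T (n + 1)).1 := fun n m h => hT_anti h (ha_mem m)
  refine ⟨a, fun n m h => not_le.1 (hT_succ n (ha_mem_succ n m h)).2,
    fun n => hT_anti n.zero_le (ha_mem n), fun n => hP _ ?_ (head_tail _ _)⟩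
  rintro _ ⟨m, hm, rfl⟩
  exact ha_mem_succ n m hm

theorem ramsey_infinite {κ : Type*} [Finite κ] (k : ℕ)
    (c : (Fin k → ℕ) → κ) {S : Set ℕ} (hS : S.Infinite) :
    ∃ M ⊆ S, M.Infinite ∧ ∃ d, ∀ v : Fin k → ℕ, StrictMono v → (∀ i, v i ∈ M) → c v = d := by
  induction k generalizing S with
  | zero =>
    exact ⟨S, subset_rfl, hS, c finZeroElim, fun v _ _ => congrArg c (Subsingleton.elim _ _)⟩
  | succ k ih =>
    obtain ⟨a, ha, ha_S, hPa⟩ := exists_strictMono_forall_image_Ioi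
      (P := fun a T => ∃ d, ∀ w, StrictMono w → (∀ i, w i ∈ T) → c (Fin.cons a w) = d)
      (fun _ _ _ hT ⟨d, hd⟩ => ⟨d, fun w hw hwT => hd w hw fun i => hT (hwT i)⟩)
      (fun T hT => by
        obtain ⟨a, haT⟩ := hT.nonempty
        obtain ⟨M, hM, hM_inf, hM_eq⟩ :=
          ih (fun w => c (Fin.cons a w)) (hT.sdiff (Set.finite_Iic a))
        exact ⟨a, haT, M, hM, hM_inf, hM_eq⟩)
      hS
    choose d hd using hPa
    obtain ⟨e, he⟩ := Finite.exists_infinite_fiber d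
    refine ⟨a '' (d ⁻¹' {e}), Set.image_subset_iff.2 fun n _ => ha_S n,
      (Set.infinite_coe_iff.1 he).image ha.injective.injOn, e, fun v hv hvM => ?_⟩
    obtain ⟨n, hn, hv0⟩ := hvM 0
    have htail : ∀ i, Fin.tail v i ∈ a '' Set.Ioi n := fun i => by
      obtain ⟨m, -, hm⟩ := hvM i.succ
      refine ⟨m, ha.lt_iff_lt.1 ?_, hm⟩
      rw [hv0, hm]
      exact hv i.succ_pos
    rw [← Fin.cons_self_tail v, ← hv0, ← hn]
    exact hd n _ (hv.comp Fin.strictMono_succ) htail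

theorem ramsey_infinite_subsequence {κ : Type*} [Finite κ] (k : ℕ)
    (c : (Fin k → ℕ) → κ) :
    ∃ u : ℕ → ℕ, StrictMono u ∧ ∃ d, ∀ s : Fin k → ℕ, StrictMono s → c (u ∘ s) = d := by
  obtain ⟨M, -, hM, d, hd⟩ := ramsey_infinite k c Set.infinite_univ
  exact ⟨Nat.nth (· ∈ M), Nat.nth_strictMono hM, d, fun s hs =>
    hd _ ((Nat.nth_strictMono hM).comp hs) fun _ => Nat.nth_mem_of_infinite hM _⟩

def mapLex (u : ℕ → ℕ) (x : ℕ ×ₗ ℕ) : ℕ ×ₗ ℕ := toLex (u (ofLex x).1, u (ofLex x).2)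

lemma strictMono_mapLex {u : ℕ → ℕ} (hu : StrictMono u) : StrictMono (mapLex u) := by
  intro x y h
  rw [Prod.Lex.lt_iff] at h
  rw [mapLex, mapLex, Prod.Lex.toLex_lt_toLex, hu.lt_iff_lt, hu.lt_iff_lt, hu.injective.eq_iff]
  exact h

inductive IntervalPattern
  | disjoint | crossing | nested | sameLeft | sameRight

namespace IntervalPattern

instance : Finite IntervalPattern :=
  Finite.of_surjective ![disjoint, crossing, nested, sameLeft, sameRight] <| by
    rintro ⟨⟩
    exacts [⟨0, rfl⟩, ⟨1, rfl⟩, ⟨2, rfl⟩, ⟨3, rfl⟩, ⟨4, rfl⟩]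

def intervals : IntervalPattern → (Fin 4 → ℕ) → (ℕ ×ₗ ℕ) × (ℕ ×ₗ ℕ)
  | disjoint, s => (toLex (s 0, s 1), toLex (s 2, s 3))
  | crossing, s => (toLex (s 0, s 2), toLex (s 1, s 3))
  | nested, s => (toLex (s 0, s 3), toLex (s 1, s 2))
  | sameLeft, s => (toLex (s 0, s 1), toLex (s 0, s 2))
  | sameRight, s => (toLex (s 0, s 2), toLex (s 1, s 2))

def Realizes (π : IntervalPattern) (x y : ℕ ×ₗ ℕ) : Prop :=
  ∃ s : Fin 4 → ℕ, StrictMono s ∧ π.intervals s = (x, y)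

lemma realizes_of_intervals_eq {π : IntervalPattern} {x y : ℕ ×ₗ ℕ} {a b c d : ℕ}
    (h : π.intervals ![a, b, c, d] = (x, y)) (hab : a < b) (hbc : b < c) (hcd : c < d) :
    π.Realizes x y :=
  ⟨_, by simp [hab, hbc, hcd], h⟩

lemma intervals_comp (π : IntervalPattern) (u : ℕ → ℕ) (s : Fin 4 → ℕ) :
    π.intervals (u ∘ s) = Prod.map (mapLex u) (mapLex u) (π.intervals s) := by
  cases π <;> rfl

lemma exists_strictMono_realizes (π : IntervalPattern) (m : ℕ) :
    ∃ z : Fin m → ℕ ×ₗ ℕ, StrictMono z ∧ ∀ i j, i < j → π.Realizes (z i) (z j) := by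
  cases π
  · refine ⟨fun j => toLex (2 * j, 2 * j + 1), fun i j h => ?_, fun i j h => ?_⟩
    · rw [Prod.Lex.toLex_lt_toLex]; omega
    · exact realizes_of_intervals_eq rfl (by omega) (by omega) (by omega)
  · refine ⟨fun j => toLex ((j : ℕ), m + j), fun i j h => ?_, fun i j h => ?_⟩
    · rw [Prod.Lex.toLex_lt_toLex]; omega
    · exact realizes_of_intervals_eq rfl h (by omega) (by omega)
  · refine ⟨fun j => toLex ((j : ℕ), 2 * m - j), fun i j h => ?_, fun i j h => ?_⟩
    · rw [Prod.Lex.toLex_lt_toLex]; omega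
    · exact realizes_of_intervals_eq rfl h (by omega) (by omega)
  · refine ⟨fun j => toLex (0, j + 1), fun i j h => ?_, fun i j h => ?_⟩
    · rw [Prod.Lex.toLex_lt_toLex]; omega
    · exact realizes_of_intervals_eq rfl (Nat.succ_pos _) (by omega) (Nat.lt_succ_self _)
  · refine ⟨fun j => toLex ((j : ℕ), m), fun i j h => ?_, fun i j h => ?_⟩
    · rw [Prod.Lex.toLex_lt_toLex]; omega
    · exact realizes_of_intervals_eq rfl h (by omega) (Nat.lt_succ_self _)

end IntervalPattern

open IntervalPattern

theorem exists_strictMono_colour_eq_of_realizes {κ : Type*} [Finite κ]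
    (f : ℕ ×ₗ ℕ → ℕ ×ₗ ℕ → κ) :
    ∃ u : ℕ → ℕ, StrictMono u ∧ ∃ d : IntervalPattern → κ,
      ∀ π x y, π.Realizes x y → f (mapLex u x) (mapLex u y) = d π := by
  obtain ⟨u, hu, d, hd⟩ := ramsey_infinite_subsequence 4
    fun s (π : IntervalPattern) => Function.uncurry f (π.intervals s)
  refine ⟨u, hu, d, ?_⟩
  rintro π x y ⟨s, hs, hsxy⟩
  simpa [intervals_comp, hsxy] using congrFun (hd s hs) π

def evenOddInterval (x : ℕ ×ₗ ℕ) : ℕ ×ₗ ℕ :=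
  toLex (2 * (ofLex x).1, 2 * (ofLex x).1 + 2 * (ofLex x).2 + 1)

lemma strictMono_evenOddInterval : StrictMono evenOddInterval := by
  intro x y h
  rw [Prod.Lex.lt_iff] at h
  rw [evenOddInterval, evenOddInterval, Prod.Lex.toLex_lt_toLex]
  omega

lemma exists_realizes_evenOddInterval {x y : ℕ ×ₗ ℕ} (h : x < y) :
    ∃ π : IntervalPattern, π.Realizes (evenOddInterval x) (evenOddInterval y) := by
  obtain ⟨⟨p, q⟩, rfl⟩ := toLex.surjective x
  obtain ⟨⟨p', q'⟩, rfl⟩ := toLex.surjective y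
  simp only [Prod.Lex.toLex_lt_toLex] at h
  simp only [evenOddInterval, ofLex_toLex]
  rcases h with hp | ⟨rfl, hq⟩
  · rcases lt_or_gt_of_ne (show 2 * p + 2 * q + 1 ≠ 2 * p' by omega) with h | h
    · exact ⟨disjoint, realizes_of_intervals_eq rfl (by omega) h (by omega)⟩
    rcases lt_trichotomy (2 * p + 2 * q + 1) (2 * p' + 2 * q' + 1) with h' | h' | h'
    · exact ⟨crossing, realizes_of_intervals_eq rfl (by omega) h h'⟩
    · rw [h'] at h ⊢
      exact ⟨sameRight, realizes_of_intervals_eq rfl (by omega) h (Nat.lt_succ_self _)⟩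
    · exact ⟨nested, realizes_of_intervals_eq rfl (by omega) (by omega) h'⟩
  · exact ⟨sameLeft, realizes_of_intervals_eq rfl (by omega) (by omega) (Nat.lt_succ_self _)⟩

theorem exists_zero_copy_or_one_clique (m : ℕ) (f : ℕ ×ₗ ℕ → ℕ ×ₗ ℕ → Fin 2) :
    (∃ g : ℕ ×ₗ ℕ → ℕ ×ₗ ℕ, StrictMono g ∧ ∀ x y, x < y → f (g x) (g y) = 0) ∨
      ∃ z : Fin m → ℕ ×ₗ ℕ, StrictMono z ∧ ∀ i j, i < j → f (z i) (z j) = 1 := by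
  obtain ⟨u, hu, d, hd⟩ := exists_strictMono_colour_eq_of_realizes f
  by_cases h : ∃ π, d π = 1
  · obtain ⟨π, hπ⟩ := h
    obtain ⟨z, hz, hzπ⟩ := exists_strictMono_realizes π m
    exact Or.inr ⟨mapLex u ∘ z, (strictMono_mapLex hu).comp hz, fun i j hij =>
      (hd π _ _ (hzπ i j hij)).trans hπ⟩
  · refine Or.inl ⟨mapLex u ∘ evenOddInterval,
      (strictMono_mapLex hu).comp strictMono_evenOddInterval, fun x y hxy => ?_⟩
    obtain ⟨π, hπ⟩ := exists_realizes_evenOddInterval hxy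
    rw [Function.comp_apply, Function.comp_apply, hd π _ _ hπ]
    have : d π ≠ 1 := fun h' => h ⟨π, h'⟩
    omega

def natLexToOrdinal (x : ℕ ×ₗ ℕ) : Ordinal := ω * (ofLex x).1 + (ofLex x).2

lemma natLexToOrdinal_lt (x : ℕ ×ₗ ℕ) : natLexToOrdinal x < ω * ((ofLex x).1 + 1 : ℕ) := by
  rw [Nat.cast_succ, mul_add_one]
  exact (add_lt_add_iff_left _).2 (natCast_lt_omega0 _)

lemma strictMono_natLexToOrdinal : StrictMono natLexToOrdinal := by
  intro x y h
  rcases Prod.Lex.lt_iff.1 h with h | ⟨h, h'⟩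
  · calc natLexToOrdinal x < ω * ((ofLex x).1 + 1 : ℕ) := natLexToOrdinal_lt x
      _ ≤ ω * (ofLex y).1 := mul_le_mul_right (Nat.cast_le.2 h) _
      _ ≤ natLexToOrdinal y := le_self_add
  · rw [natLexToOrdinal, natLexToOrdinal, h]
    exact (add_lt_add_iff_left _).2 (Nat.cast_lt.2 h')

lemma omega0_opow_two : ω ^ (2 : Ordinal) = ω * ω := by
  rw [← Nat.cast_two, opow_natCast, pow_two]

lemma range_natLexToOrdinal : Set.range natLexToOrdinal = Set.Iio (ω ^ (2 : Ordinal)) := by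
  ext o
  rw [Set.mem_Iio, omega0_opow_two]
  refine ⟨?_, fun ho => ?_⟩
  · rintro ⟨x, rfl⟩
    exact (natLexToOrdinal_lt x).trans_le (mul_le_mul_right (natCast_lt_omega0 _).le _)
  · obtain ⟨a, ha⟩ := lt_omega0.1 ((lt_mul_iff_div_lt omega0_ne_zero).1 ho)
    obtain ⟨b, hb⟩ := lt_omega0.1 (mod_lt o omega0_ne_zero)
    refine ⟨toLex (a, b), ?_⟩
    rw [natLexToOrdinal, ofLex_toLex, ← ha, ← hb, div_add_mod]

/-- Specker's theorem: for every `m`, `ω² → (ω², m)²`. -/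
theorem specker (m : ℕ) (f : Ordinal → Ordinal → Fin 2) :
    (∃ B ⊆ Set.Iio (Ordinal.omega0 ^ (2 : Ordinal)),
        HasOtype B (Ordinal.omega0 ^ (2 : Ordinal)) ∧
        ∀ x ∈ B, ∀ y ∈ B, x < y → f x y = 0) ∨
    (∃ C : Finset Ordinal, ↑C ⊆ Set.Iio (Ordinal.omega0 ^ (2 : Ordinal)) ∧ C.card = m ∧
        ∀ x ∈ C, ∀ y ∈ C, x < y → f x y = 1) := by
  set e := natLexToOrdinal
  have he_lt : ∀ x, e x < ω ^ (2 : Ordinal) := fun x =>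
    range_natLexToOrdinal.subset (Set.mem_range_self x)
  rcases exists_zero_copy_or_one_clique m (fun x y => f (e x) (e y)) with
    ⟨g, hg, hg0⟩ | ⟨z, hz, hz1⟩
  · have heg := strictMono_natLexToOrdinal.comp hg
    refine Or.inl ⟨Set.range (e ∘ g), Set.range_subset_iff.2 fun x => he_lt (g x),
      ⟨(heg.orderIso _).symm.trans <| (strictMono_natLexToOrdinal.orderIso _).trans <|
        OrderIso.setCongr _ _ range_natLexToOrdinal⟩, ?_⟩
    rintro _ ⟨x, rfl⟩ _ ⟨y, rfl⟩ hxy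
    exact hg0 x y (heg.lt_iff_lt.1 hxy)
  · have hez := strictMono_natLexToOrdinal.comp hz
    refine Or.inr ⟨Finset.univ.image (e ∘ z), ?_, ?_, ?_⟩
    · simpa [Set.subset_def] using fun i => he_lt (z i)
    · rw [Finset.card_image_of_injective _ hez.injective, Finset.card_univ, Fintype.card_fin]
    · simp only [Finset.mem_image, Finset.mem_univ, true_and]
      rintro _ ⟨i, rfl⟩ _ ⟨j, rfl⟩ hij
      exact hz1 i j (hez.lt_iff_lt.1 hij)
end

section
/- Let W be the set of finite strictly increasing sequences of natural numbers. For each l > 0, the interaction scheme i_l is injective on pairs of form l: if {x,y} and {x',y'} both have form l and i_l({x,y}) = i_l({x',y'}), then {x,y} = {x',y'}. -/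
/-- Accumulated lengths of a list of lists. -/
def accLengths : ℕ → List (List ℕ) → List ℕ
  | _, [] => []
  | acc, l :: ls => (acc + l.length) :: accLengths (acc + l.length) ls

/-- Interleaved concatenation of two lists of lists. -/
def interact : List (List ℕ) → List (List ℕ) → List ℕ
  | [], ys => ys.flatten
  | x :: xs, [] => (x :: xs).flatten
  | x :: xs, y :: ys => x ++ y ++ interact xs ys

/-- `FormBody ka kb x y zs`: `x` decomposes into `ka` nonempty pieces, `y` into `kb`
nonempty pieces, and `zs` is the associated interaction scheme
`c ∗ a₁ ∗ d ∗ b₁ ∗ a₂ ∗ b₂ ∗ …`, which is strictly increasing (equivalently the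
interleaving condition `c < a₁ < d < b₁ < a₂ < … ` holds). -/
def FormBody (ka kb : ℕ) (x y zs : List ℕ) : Prop :=
  ∃ a as b bs, x.length < y.length ∧
    x = (a :: as).flatten ∧ y = (b :: bs).flatten ∧
    (∀ l ∈ a :: as, l ≠ []) ∧ (∀ l ∈ b :: bs, l ≠ []) ∧
    (a :: as).length = ka ∧ (b :: bs).length = kb ∧
    zs = accLengths 0 (a :: as) ++ a ++ accLengths 0 (b :: bs) ++ b ++ interact as bs ∧
    List.Pairwise (· < ·) zs

/-- `zs` is the interaction scheme `i_l({x,y})` of the pair `{x,y}` of form `l`. -/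
def InterScheme (l : ℕ) (x y zs : List ℕ) : Prop :=
  (∃ k, 0 < k ∧ l = 2 * k - 1 ∧ FormBody k k x y zs) ∨
  (∃ k, 0 < k ∧ l = 2 * k ∧ FormBody (k + 1) k x y zs)

/-! The scheme is read off from left to right. Its first block `c` has as many entries as `x`
has pieces, a number fixed by `l`, and the entries of `c` give the lengths of those pieces;
so `c` and then `a₁` can be cut off. The same applies to `d` and `b₁`, and once the lengths of
all pieces are known the interleaved tail `a₂ ∗ b₂ ∗ …` splits back into its pieces. -/

open List

theorem length_accLengths (n : ℕ) (L : List (List ℕ)) :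
    (accLengths n L).length = L.length := by
  induction L generalizing n <;> simp [accLengths, *]

theorem map_length_eq_of_accLengths_eq {n : ℕ} {L L' : List (List ℕ)}
    (h : accLengths n L = accLengths n L') : L.map length = L'.map length := by
  induction L generalizing n L' with
  | nil => cases L' <;> simp_all [accLengths]
  | cons a as ih =>
    cases L' with
    | nil => simp [accLengths] at h
    | cons a' as' =>
      simp only [accLengths, cons.injEq] at h
      obtain ⟨hhead, htail⟩ := h
      have hlen : a.length = a'.length := by omega
      rw [hlen] at htail
      simp only [map_cons, hlen, ih htail]

theorem map_length_eq_of_accLengths_append_eq {n : ℕ} {L L' : List (List ℕ)} {r r' : List ℕ}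
    (hlen : L.length = L'.length) (h : accLengths n L ++ r = accLengths n L' ++ r') :
    L.map length = L'.map length ∧ r = r' := by
  obtain ⟨hacc, hrest⟩ := append_inj h (by rw [length_accLengths, length_accLengths, hlen])
  exact ⟨map_length_eq_of_accLengths_eq hacc, hrest⟩

theorem flatten_eq_of_interact_eq {as bs as' bs' : List (List ℕ)}
    (ha : as.map length = as'.map length) (hb : bs.map length = bs'.map length)
    (h : interact as bs = interact as' bs') :
    as.flatten = as'.flatten ∧ bs.flatten = bs'.flatten := by
  induction as, bs using interact.induct generalizing as' bs' with
  | case1 bs =>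
    obtain rfl : as' = [] := by simpa using ha.symm
    exact ⟨rfl, h⟩
  | case2 a as =>
    obtain rfl : bs' = [] := by simpa using hb.symm
    obtain ⟨a', as', rfl⟩ := exists_cons_of_ne_nil (l := as') (by rintro rfl; simp at ha)
    exact ⟨h, rfl⟩
  | case3 a as b bs ih =>
    obtain ⟨a', as', rfl⟩ := exists_cons_of_ne_nil (l := as') (by rintro rfl; simp at ha)
    obtain ⟨b', bs', rfl⟩ := exists_cons_of_ne_nil (l := bs') (by rintro rfl; simp at hb)
    simp only [map_cons, cons.injEq] at ha hb
    simp only [interact, append_assoc] at h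
    obtain ⟨rfl, h₁⟩ := append_inj h ha.1
    obtain ⟨rfl, h₂⟩ := append_inj h₁ hb.1
    obtain ⟨hfa, hfb⟩ := ih ha.2 hb.2 h₂
    simp [hfa, hfb]

theorem FormBody.unique {ka kb : ℕ} {x y x' y' zs : List ℕ}
    (h : FormBody ka kb x y zs) (h' : FormBody ka kb x' y' zs) : x = x' ∧ y = y' := by
  obtain ⟨a, as, b, bs, -, rfl, rfl, -, -, hka, hkb, rfl, -⟩ := h
  obtain ⟨a', as', b', bs', -, rfl, rfl, -, -, hka', hkb', hzs, -⟩ := h'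
  simp only [append_assoc] at hzs
  obtain ⟨hA, hzs₁⟩ := map_length_eq_of_accLengths_append_eq (hka.trans hka'.symm) hzs
  simp only [map_cons, cons.injEq] at hA
  obtain ⟨rfl, hzs₂⟩ := append_inj hzs₁ hA.1
  obtain ⟨hB, hzs₃⟩ := map_length_eq_of_accLengths_append_eq (hkb.trans hkb'.symm) hzs₂
  simp only [map_cons, cons.injEq] at hB
  obtain ⟨rfl, hzs₄⟩ := append_inj hzs₃ hB.1
  obtain ⟨hfa, hfb⟩ := flatten_eq_of_interact_eq hA.2 hB.2 hzs₄
  simp [hfa, hfb]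

theorem inter_scheme_injective_general (l : ℕ) (x y x' y' zs : List ℕ)
    (h : InterScheme l x y zs) (h' : InterScheme l x' y' zs) :
    x = x' ∧ y = y' := by
  rcases h with ⟨k, hk, rfl, hf⟩ | ⟨k, hk, rfl, hf⟩ <;>
    rcases h' with ⟨k', hk', hl, hf'⟩ | ⟨k', hk', hl, hf'⟩
  · obtain rfl : k = k' := by omega
    exact hf.unique hf'
  · omega
  · omega
  · obtain rfl : k = k' := by omega
    exact hf.unique hf'

/-- For `l > 0` the interaction scheme is injective on pairs of form `l`. -/
theorem inter_scheme_injective (l : ℕ) (hl : 0 < l) (x y x' y' zs : List ℕ)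
    (h : InterScheme l x y zs) (h' : InterScheme l x' y' zs) :
    x = x' ∧ y = y' :=
  inter_scheme_injective_general l x y x' y' zs h h'
end

section
/- For each l > 0, the set of interaction schemes { i_l(U) : U is a pair of strictly increasing sequences of form l }, viewed as finite increasing sequences, is thin: no interaction scheme is a proper initial segment of another (Larson's Lemma 3.11). -/
/-!
The length of an interaction scheme `zs = c ∗ a₁ ∗ d ∗ b₁ ∗ …` of a pair of form `(ka, kb)` can be
read off an initial segment of `zs`: its first entry is `|a₁|`, its `ka`-th entry is `|x|`, and its
`(ka + |a₁| + kb)`-th entry is `|y|`, so `|zs| = ka + kb + |x| + |y|`. A scheme that is a prefix of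
another scheme of the same form therefore has the same length as it, hence equals it.
-/

lemma accLengths_length (acc : ℕ) (L : List (List ℕ)) :
    (accLengths acc L).length = L.length := by
  induction L generalizing acc with
  | nil => rfl
  | cons l ls ih => simp [accLengths, ih]

lemma accLengths_cons_getElem?_zero (acc : ℕ) (l : List ℕ) (ls : List (List ℕ)) :
    (accLengths acc (l :: ls))[0]? = some (acc + l.length) := by
  simp [accLengths]

lemma accLengths_cons_getLast? (acc : ℕ) (l : List ℕ) (ls : List (List ℕ)) :
    (accLengths acc (l :: ls)).getLast? = some (acc + (l :: ls).flatten.length) := by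
  induction ls generalizing acc l with
  | nil => simp [accLengths]
  | cons m ms ih =>
    rw [accLengths, List.getLast?_cons, ih]
    simp [Nat.add_assoc]

lemma interact_length (xs ys : List (List ℕ)) :
    (interact xs ys).length = xs.flatten.length + ys.flatten.length := by
  induction xs generalizing ys with
  | nil => simp [interact]
  | cons x xs ih =>
    cases ys with
    | nil => simp [interact]
    | cons y ys => simp [interact, ih]; omega

lemma List.IsPrefix.getElem?_eq_some {α : Type*} {l₁ l₂ : List α} (h : l₁ <+: l₂) {i : ℕ}
    {a : α} (hi : l₁[i]? = some a) : l₂[i]? = some a := by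
  obtain ⟨t, rfl⟩ := h
  rw [List.getElem?_append_left (List.getElem?_eq_some_iff.mp hi).1, hi]

def schemeLength (ka kb : ℕ) (zs : List ℕ) : Option ℕ := do
  let lx ← zs[ka - 1]?
  let la ← zs[0]?
  let ly ← zs[ka + la + kb - 1]?
  pure (ka + kb + lx + ly)

lemma schemeLength_of_isPrefix {ka kb n : ℕ} {zs zs' : List ℕ} (hpre : zs <+: zs')
    (h : schemeLength ka kb zs = some n) : schemeLength ka kb zs' = some n := by
  simp only [schemeLength, Option.bind_eq_bind, Option.bind_eq_some_iff, Option.pure_def] at h ⊢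
  obtain ⟨lx, hx, la, ha, ly, hy, hn⟩ := h
  exact ⟨lx, hpre.getElem?_eq_some hx, la, hpre.getElem?_eq_some ha, ly,
    hpre.getElem?_eq_some hy, hn⟩

lemma FormBody.schemeLength_eq {ka kb : ℕ} {x y zs : List ℕ} (h : FormBody ka kb x y zs) :
    schemeLength ka kb zs = some zs.length := by
  obtain ⟨a, as, b, bs, -, rfl, rfl, -, -, rfl, rfl, rfl, -⟩ := h
  set c := accLengths 0 (a :: as)
  set d := accLengths 0 (b :: bs)
  have hc : c.length = (a :: as).length := accLengths_length _ _
  have hd : d.length = (b :: bs).length := accLengths_length _ _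
  have hx : (c ++ a ++ d ++ b ++ interact as bs)[(a :: as).length - 1]? =
      some (a :: as).flatten.length := by
    simp only [List.append_assoc]
    rw [List.getElem?_append_left (by simp [hc]), ← hc, ← List.getLast?_eq_getElem?,
      accLengths_cons_getLast?, zero_add]
  have ha : (c ++ a ++ d ++ b ++ interact as bs)[0]? = some a.length := by
    simp only [List.append_assoc]
    rw [List.getElem?_append_left (by simp [hc]), accLengths_cons_getElem?_zero, zero_add]
  have hy : (c ++ a ++ d ++ b ++ interact as bs)[(a :: as).length + a.length +
      (b :: bs).length - 1]? = some (b :: bs).flatten.length := by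
    rw [List.getElem?_append_left (by simp [hc, hd]; omega),
      List.getElem?_append_left (by simp [hc, hd]; omega),
      List.getElem?_append_right (by simp [hc]), ← hd, List.length_append, hc]
    rw [show (a :: as).length + a.length + d.length - 1 - ((a :: as).length + a.length) =
      d.length - 1 by omega, ← List.getLast?_eq_getElem?, accLengths_cons_getLast?, zero_add]
  rw [schemeLength]
  simp only [Option.bind_eq_bind]
  rw [hx, Option.bind_some, ha, Option.bind_some, hy, Option.bind_some]
  simp only [Option.pure_def, List.length_append, interact_length, hc, hd, List.flatten_cons,
    List.length_cons]
  congr 1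
  omega

lemma FormBody.eq_of_isPrefix {ka kb : ℕ} {x y zs x' y' zs' : List ℕ}
    (h : FormBody ka kb x y zs) (h' : FormBody ka kb x' y' zs') (hpre : zs <+: zs') :
    zs = zs' := by
  have hlen : some zs.length = some zs'.length :=
    (schemeLength_of_isPrefix hpre h.schemeLength_eq).symm.trans h'.schemeLength_eq
  exact hpre.eq_of_length (Option.some_inj.mp hlen)

lemma InterScheme.formBody {l : ℕ} {x y zs : List ℕ} (h : InterScheme l x y zs) :
    FormBody ((l + 2) / 2) ((l + 1) / 2) x y zs := by
  rcases h with ⟨k, hk, rfl, hf⟩ | ⟨k, -, rfl, hf⟩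
  · rwa [show (2 * k - 1 + 2) / 2 = k by omega, show (2 * k - 1 + 1) / 2 = k by omega]
  · rwa [show (2 * k + 2) / 2 = k + 1 by omega, show (2 * k + 1) / 2 = k by omega]

theorem inter_scheme_thin_general (l : ℕ) (x y zs x' y' zs' : List ℕ)
    (h : InterScheme l x y zs) (h' : InterScheme l x' y' zs')
    (hpre : zs <+: zs') : zs = zs' :=
  h.formBody.eq_of_isPrefix h'.formBody hpre

/-- Larson's Lemma 3.11: for `l > 0`, the set of interaction schemes of pairs of
form `l` is thin: no one is a proper initial segment (prefix) of another. -/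
theorem inter_scheme_thin (l : ℕ) (hl : 0 < l) (x y zs x' y' zs' : List ℕ)
    (h : InterScheme l x y zs) (h' : InterScheme l x' y' zs')
    (hpre : zs <+: zs') : zs = zs' :=
  inter_scheme_thin_general l x y zs x' y' zs' h h' hpre
end

section
/- (Larson's Lemma 3.7) For every infinite N ⊆ ℕ and all natural numbers m and l with l > 0, there is an m-element set M of strictly increasing finite sequences of naturals such that every pair {x,y} ⊆ M has form l and its interaction scheme i_l({x,y}) has all entries in N. -/
/-!
Let `f` enumerate `N` increasingly. Every sequence is `f` applied to a list of indices, so it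
suffices to lay out blocks of indices in increasing order. The blocks of sequence `j` are
chosen so that their lengths have partial sums `f (q j), …, f (q j + K - 1)`, where
`q j = headStart f K j`: the accumulated lengths are then `f` of the indices `[q j, q j + K)`,
and block `0` takes the indices right after them. Hence the heads `c ∗ a₁` of the sequences
are stacked in the order of `j`, and sequence `j` is longer than every sequence `i < j`.

All further blocks lie above every head, in slots spaced `f (q m)` apart (a bound for all
their lengths), grouped in rounds: round `t` holds block `t` of every sequence in increasing
order of `j`, which gives the alternation `aₜ < bₜ < aₜ₊₁` of a pair of form `2k - 1`. For
form `2k` the last round is reversed and the last two blocks of the longer sequence are merged,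
so that its final piece falls between `aₖ` and `aₖ₊₁`.
-/

namespace Larson

open List

theorem accLengths_map_range' {g : ℕ → ℕ} (hg : Monotone g) {blk : ℕ → List ℕ}
    (hblk : ∀ t, (blk t).length = g (t + 1) - g t) (s n : ℕ) :
    accLengths (g s) ((range' s n).map blk) = (range' (s + 1) n).map g := by
  induction n generalizing s with
  | zero => rfl
  | succ n ih =>
    have hstep : g s + (g (s + 1) - g s) = g (s + 1) := Nat.add_sub_cancel' (hg s.le_succ)
    simp only [range'_succ, map_cons, accLengths, hblk, hstep, ih]

theorem length_flatten_map_range' {g : ℕ → ℕ} (hg : Monotone g) {blk : ℕ → List ℕ}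
    (hblk : ∀ t, (blk t).length = g (t + 1) - g t) (s n : ℕ) :
    ((range' s n).map blk).flatten.length = g (s + n) - g s := by
  induction n generalizing s with
  | zero => simp
  | succ n ih =>
    have h₁ := hg (show s ≤ s + 1 by omega)
    have h₂ := hg (show s + 1 ≤ s + 1 + n by omega)
    simp only [range'_succ, map_cons, flatten_cons, length_append, hblk, ih]
    rw [show s + (n + 1) = s + 1 + n by omega]
    omega

theorem accLengths_append_merge_sublist (a : ℕ) (L : List (List ℕ)) (u v : List ℕ)
    (R : List (List ℕ)) :
    accLengths a (L ++ (u ++ v) :: R) <+ accLengths a (L ++ u :: v :: R) := by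
  induction L generalizing a with
  | nil =>
    simp only [nil_append, accLengths, length_append, ← Nat.add_assoc]
    exact (Sublist.refl _).cons _
  | cons l L ih => exact (ih _).cons_cons _

theorem interact_map_map {ι : Type*} (l : List ι) (g h : ι → List ℕ) :
    interact (l.map g) (l.map h) = l.flatMap fun t => g t ++ h t := by
  induction l with
  | nil => rfl
  | cons t l ih => simp only [map_cons, interact, ih, flatMap_cons, append_assoc]

theorem interact_append {L L' : List (List ℕ)} (h : L.length = L'.length)
    (R R' : List (List ℕ)) :
    interact (L ++ R) (L' ++ R') = interact L L' ++ interact R R' := by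
  induction L generalizing L' with
  | nil => cases L' with
    | nil => rfl
    | cons => simp at h
  | cons x L ih => cases L' with
    | nil => simp at h
    | cons y L' => simp only [cons_append, interact, ih (Nat.succ_injective h), append_assoc]

theorem pairwise_append_of_lt_of_le {α : Type*} [Preorder α] {l₁ l₂ : List α} {c : α}
    (h₁ : l₁.Pairwise (· < ·)) (h₂ : l₂.Pairwise (· < ·)) (hc₁ : ∀ x ∈ l₁, x < c)
    (hc₂ : ∀ y ∈ l₂, c ≤ y) : (l₁ ++ l₂).Pairwise (· < ·) :=
  pairwise_append.2 ⟨h₁, h₂, fun x hx y hy => (hc₁ x hx).trans_le (hc₂ y hy)⟩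

theorem pairwise_and_mem_range_of_sublist {f : ℕ → ℕ} (hf : StrictMono f) {zs Z : List ℕ}
    (hZ : Z.Pairwise (· < ·)) (h : zs <+ Z.map f) :
    zs.Pairwise (· < ·) ∧ ∀ a ∈ zs, a ∈ Set.range f :=
  ⟨((pairwise_map.2 (hZ.imp fun hxy => hf hxy)).sublist h), fun a ha => by
    obtain ⟨u, -, rfl⟩ := mem_map.1 (h.subset ha)
    exact ⟨u, rfl⟩⟩

theorem map_range'_add_two {α : Type*} (g : ℕ → α) (n : ℕ) :
    (range' 0 (n + 2)).map g = (range' 0 n).map g ++ [g n, g (n + 1)] := by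
  simp [range'_concat]

theorem flatMap_range'_zero_append (g : ℕ → List ℕ) (n : ℕ) :
    (range' 0 n).flatMap g ++ g n = g 0 ++ (range' 1 n).flatMap g := by
  have h₁ : (range' 0 (n + 1)).flatMap g = (range' 0 n).flatMap g ++ g n := by
    simp [range'_concat]
  have h₂ : (range' 0 (n + 1)).flatMap g = g 0 ++ (range' 1 n).flatMap g := by
    simp [range'_succ]
  rw [← h₁, h₂]

section Construction

variable (f : ℕ → ℕ) (K m T : ℕ)

def headStart : ℕ → ℕ
  | 0 => 0
  | j + 1 => headStart j + K + f (headStart j)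

def cum (j : ℕ) : ℕ → ℕ
  | 0 => 0
  | t + 1 => f (headStart f K j + t)

def slot (j t : ℕ) : ℕ := t * m + if t ≤ T then j else m - 1 - j

def blockStart (j t : ℕ) : ℕ :=
  if t = 0 then headStart f K j + K
  else headStart f K m + slot m T j t * f (headStart f K m)

def block (j t : ℕ) : List ℕ :=
  range' (blockStart f K m T j t) (cum f K j (t + 1) - cum f K j t)

def piece (j t : ℕ) : List ℕ := (block f K m T j t).map f

def seq (j : ℕ) : List ℕ := ((range' 0 K).map (piece f K m T j)).flatten

def headRange (j : ℕ) : List ℕ := range' (headStart f K j) K ++ block f K m T j 0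

def roundBlocks (i j n : ℕ) : List ℕ :=
  (range' 1 n).flatMap fun t => block f K m T i t ++ block f K m T j t

end Construction

section Slot

variable {m T : ℕ}

theorem slot_lt_slot_of_lt {j j' t t' : ℕ} (hj : j < m) (ht : t < t') :
    slot m T j t < slot m T j' t' :=
  calc slot m T j t < t * m + m := by unfold slot; split_ifs <;> omega
    _ = (t + 1) * m := by ring
    _ ≤ t' * m := Nat.mul_le_mul_right m ht
    _ ≤ slot m T j' t' := Nat.le_add_right _ _

theorem slot_lt_slot_of_le {i j t : ℕ} (hij : i < j) (ht : t ≤ T) :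
    slot m T i t < slot m T j t := by
  simp only [slot, if_pos ht]; omega

theorem slot_lt_slot_of_gt {i j t : ℕ} (hij : i < j) (hj : j < m) (ht : T < t) :
    slot m T j t < slot m T i t := by
  simp only [slot, if_neg (not_le.2 ht)]; omega

end Slot

section Layout

variable {f : ℕ → ℕ} {K m T : ℕ} {i j : ℕ}

theorem headStart_succ (j : ℕ) :
    headStart f K (j + 1) = headStart f K j + K + f (headStart f K j) := rfl

theorem headStart_mono : Monotone (headStart f K) :=
  monotone_nat_of_le_succ fun j => by rw [headStart_succ]; omega

theorem headStart_strictMono (hK : 0 < K) : StrictMono (headStart f K) :=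
  strictMono_nat_of_lt_succ fun j => by rw [headStart_succ]; omega

theorem cum_mono (hf : Monotone f) (j : ℕ) : Monotone (cum f K j) := by
  refine monotone_nat_of_le_succ fun t => ?_
  cases t with
  | zero => exact Nat.zero_le _
  | succ t => exact hf (by omega)

theorem length_block (j t : ℕ) :
    (block f K m T j t).length = cum f K j (t + 1) - cum f K j t := by
  simp [block]

theorem length_block_pos (hf : StrictMono f) (hf0 : 0 < f 0) (j t : ℕ) :
    0 < (block f K m T j t).length := by
  rw [length_block]
  cases t with
  | zero => simpa [cum] using hf0.trans_le (hf.monotone (Nat.zero_le _))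
  | succ t => exact Nat.sub_pos_of_lt (hf (by omega))

theorem piece_ne_nil (hf : StrictMono f) (hf0 : 0 < f 0) (j t : ℕ) :
    piece f K m T j t ≠ [] := by
  rw [piece, ne_eq, map_eq_nil_iff, ← length_eq_zero_iff]
  exact (length_block_pos hf hf0 j t).ne'

theorem length_block_le (hf : Monotone f) {t : ℕ} (hj : j < m) (ht : t < K) :
    (block f K m T j t).length ≤ f (headStart f K m) := by
  have hstart : headStart f K j + t ≤ headStart f K m := by
    have := headStart_mono (f := f) (K := K) (Nat.succ_le_of_lt hj)
    rw [headStart_succ] at this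
    omega
  rw [length_block]
  exact (Nat.sub_le _ _).trans (hf hstart)

theorem mem_block_zero {x : ℕ} (hx : x ∈ block f K m T j 0) :
    headStart f K j + K ≤ x ∧ x < headStart f K (j + 1) := by
  simpa [block, blockStart, cum, headStart_succ, mem_range'_1] using hx

theorem mem_headRange {x : ℕ} (hx : x ∈ headRange f K m T j) :
    headStart f K j ≤ x ∧ x < headStart f K (j + 1) := by
  rcases mem_append.1 hx with hx | hx
  · rw [mem_range'_1, headStart_succ] at *
    omega
  · have := mem_block_zero hx
    omega

theorem headStart_le_of_mem_block {t x : ℕ} (ht : t ≠ 0) (hx : x ∈ block f K m T j t) :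
    headStart f K m ≤ x := by
  simp only [block, blockStart, if_neg ht, mem_range'_1] at hx
  omega

theorem lt_of_mem_block_of_slot_lt (hf : Monotone f) {j' t t' x y : ℕ} (hj : j < m)
    (ht : t ≠ 0) (htK : t < K) (ht' : t' ≠ 0) (hslot : slot m T j t < slot m T j' t')
    (hx : x ∈ block f K m T j t) (hy : y ∈ block f K m T j' t') : x < y := by
  have hlen := length_block_le (T := T) hf hj htK
  have hmul := Nat.mul_le_mul_right (f (headStart f K m)) (Nat.succ_le_of_lt hslot)
  rw [length_block] at hlen
  rw [Nat.succ_mul] at hmul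
  simp only [block, blockStart, if_neg ht, if_neg ht', mem_range'_1] at hx hy
  omega

theorem lt_of_mem_block_of_lt (hf : Monotone f) {j' t t' x y : ℕ} (hj : j < m)
    (htt' : t < t') (ht' : t' < K) (hx : x ∈ block f K m T j t)
    (hy : y ∈ block f K m T j' t') : x < y := by
  rcases Nat.eq_zero_or_pos t with rfl | ht
  · calc x < headStart f K (j + 1) := (mem_block_zero hx).2
      _ ≤ headStart f K m := headStart_mono hj
      _ ≤ y := headStart_le_of_mem_block htt'.ne' hy
  · exact lt_of_mem_block_of_slot_lt hf hj ht.ne' (htt'.trans ht') (by omega)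
      (slot_lt_slot_of_lt hj htt') hx hy

theorem pairwise_block (j t : ℕ) : (block f K m T j t).Pairwise (· < ·) :=
  pairwise_lt_range' 1

theorem seq_eq_map (j : ℕ) :
    seq f K m T j = ((range' 0 K).flatMap (block f K m T j)).map f := by
  rw [map_flatMap, flatMap_def]
  rfl

theorem pairwise_seq (hf : StrictMono f) (hj : j < m) :
    (seq f K m T j).Pairwise (· < ·) := by
  rw [seq_eq_map, pairwise_map]
  refine (pairwise_flatMap.2 ⟨fun t _ => pairwise_block j t, ?_⟩).imp fun hxy => hf hxy
  refine (pairwise_lt_range' 1).imp_of_mem fun {t t'} _ ht' htt' x hx y hy => ?_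
  exact lt_of_mem_block_of_lt hf.monotone hj htt' (by simpa using (mem_range'_1.1 ht').2) hx hy

theorem accLengths_pieces (hf : Monotone f) (j : ℕ) :
    accLengths 0 ((range' 0 K).map (piece f K m T j)) =
      (range' (headStart f K j) K).map f := by
  have h := accLengths_map_range' (cum_mono hf j) (blk := piece f K m T j)
    (fun t => by rw [piece, length_map, length_block]) 0 K
  rw [show cum f K j 0 = 0 from rfl] at h
  rw [h, range'_eq_map_range, range'_eq_map_range, map_map, map_map]
  refine map_congr_left fun t _ => ?_
  simp [cum, Nat.add_comm 1 t]

theorem length_seq (hf : Monotone f) (n j : ℕ) :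
    (seq f (n + 1) m T j).length = f (headStart f (n + 1) j + n) := by
  rw [seq, length_flatten_map_range' (cum_mono hf j) (blk := piece f (n + 1) m T j)
    (fun t => by rw [piece, length_map, length_block])]
  simp [cum]

theorem pairwise_headRange (j : ℕ) : (headRange f K m T j).Pairwise (· < ·) :=
  pairwise_append_of_lt_of_le (pairwise_lt_range' 1) (pairwise_block j 0)
    (fun _ hx => by rw [mem_range'_1] at hx; exact hx.2) fun _ hy => (mem_block_zero hy).1

theorem pairwise_headRange_append (hij : i < j) (hj : j < m) {R : List ℕ}
    (hR : R.Pairwise (· < ·)) (hRge : ∀ x ∈ R, headStart f K m ≤ x) :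
    (headRange f K m T i ++ headRange f K m T j ++ R).Pairwise (· < ·) := by
  have hi : headStart f K (i + 1) ≤ headStart f K j := headStart_mono hij
  have hj' : headStart f K (j + 1) ≤ headStart f K m := headStart_mono hj
  refine pairwise_append_of_lt_of_le ?_ hR (fun x hx => ?_) hRge
  · exact pairwise_append_of_lt_of_le (pairwise_headRange i) (pairwise_headRange j)
      (fun x hx => (mem_headRange hx).2.trans_le hi) fun y hy => (mem_headRange hy).1
  · rcases mem_append.1 hx with hx | hx
    · exact (mem_headRange hx).2.trans_le (hi.trans (headStart_mono (by omega)))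
    · exact (mem_headRange hx).2.trans_le hj'

theorem exists_mem_block_of_mem_roundBlocks {n x : ℕ} (hx : x ∈ roundBlocks f K m T i j n) :
    ∃ t, 1 ≤ t ∧ t ≤ n ∧ (x ∈ block f K m T i t ∨ x ∈ block f K m T j t) := by
  obtain ⟨t, ht, hx⟩ := mem_flatMap.1 hx
  rw [mem_range'_1] at ht
  exact ⟨t, ht.1, by omega, mem_append.1 hx⟩

theorem headStart_le_of_mem_roundBlocks {n x : ℕ} (hx : x ∈ roundBlocks f K m T i j n) :
    headStart f K m ≤ x := by
  obtain ⟨t, ht, -, hx | hx⟩ := exists_mem_block_of_mem_roundBlocks hx <;>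
    exact headStart_le_of_mem_block (by omega) hx

theorem lt_of_mem_roundBlocks_of_mem_block (hf : Monotone f) (hij : i < j) (hj : j < m)
    {n j' t' x y : ℕ} (hnt' : n < t') (ht' : t' < K) (hx : x ∈ roundBlocks f K m T i j n)
    (hy : y ∈ block f K m T j' t') : x < y := by
  obtain ⟨t, -, htn, hx | hx⟩ := exists_mem_block_of_mem_roundBlocks hx
  · exact lt_of_mem_block_of_lt hf (hij.trans hj) (by omega) ht' hx hy
  · exact lt_of_mem_block_of_lt hf hj (by omega) ht' hx hy

theorem pairwise_roundBlocks (hf : Monotone f) (hij : i < j) (hj : j < m) {n : ℕ}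
    (hnT : n ≤ T) (hnK : n < K) : (roundBlocks f K m T i j n).Pairwise (· < ·) := by
  have hround : ∀ {t t'}, t < t' → t' ≤ n → ∀ {j₀ j₁ x y}, j₀ < m →
      x ∈ block f K m T j₀ t → y ∈ block f K m T j₁ t' → x < y :=
    fun htt' ht' _ _ _ _ hj₀ hx hy => lt_of_mem_block_of_lt hf hj₀ htt' (by omega) hx hy
  refine pairwise_flatMap.2 ⟨fun t ht => ?_, ?_⟩
  · rw [mem_range'_1] at ht
    exact pairwise_append.2 ⟨pairwise_block i t, pairwise_block j t, fun x hx y hy =>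
      lt_of_mem_block_of_slot_lt hf (hij.trans hj) (by omega) (by omega) (by omega)
        (slot_lt_slot_of_le hij (by omega)) hx hy⟩
  · refine (pairwise_lt_range' 1).imp_of_mem fun {t t'} _ ht' htt' x hx y hy => ?_
    have ht'n : t' ≤ n := by have := (mem_range'_1.1 ht').2; omega
    rcases mem_append.1 hx with hx | hx <;> rcases mem_append.1 hy with hy | hy
    all_goals first
      | exact hround htt' ht'n (hij.trans hj) hx hy
      | exact hround htt' ht'n hj hx hy

theorem pairwise_roundBlocks_append_last (hf : Monotone f) (hij : i < j) (hj : j < m) {n : ℕ}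
    (hK : n + 1 < K) :
    (roundBlocks f K m n i j n ++ (block f K m n j (n + 1) ++ block f K m n i (n + 1))).Pairwise
      (· < ·) := by
  refine pairwise_append.2 ⟨pairwise_roundBlocks hf hij hj le_rfl (by omega),
    pairwise_append.2 ⟨pairwise_block _ _, pairwise_block _ _, fun x hx y hy => ?_⟩,
    fun x hx y hy => ?_⟩
  · exact lt_of_mem_block_of_slot_lt hf hj n.succ_ne_zero hK n.succ_ne_zero
      (slot_lt_slot_of_gt hij hj n.lt_succ_self) hx hy
  · rcases mem_append.1 hy with hy | hy <;>
      exact lt_of_mem_roundBlocks_of_mem_block hf hij hj n.lt_succ_self hK hx hy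

theorem headStart_le_of_mem_roundBlocks_append_last {n x : ℕ}
    (hx : x ∈ roundBlocks f K m n i j n ++
      (block f K m n j (n + 1) ++ block f K m n i (n + 1))) :
    headStart f K m ≤ x := by
  rcases mem_append.1 hx with hx | hx
  · exact headStart_le_of_mem_roundBlocks hx
  · rcases mem_append.1 hx with hx | hx <;> exact headStart_le_of_mem_block n.succ_ne_zero hx

end Layout

section Schemes

variable {f : ℕ → ℕ} {m T : ℕ} {i j : ℕ}

theorem length_seq_strictMono (hf : StrictMono f) (n : ℕ) :
    StrictMono fun j => (seq f (n + 1) m T j).length := fun i j hij => by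
  simp only [length_seq hf.monotone]
  exact hf (Nat.add_lt_add_right (headStart_strictMono n.succ_pos hij) n)

theorem ne_nil_of_mem_map_piece (hf : StrictMono f) (hf0 : 0 < f 0) {K s k : ℕ}
    {l : List ℕ} (hl : l ∈ (range' s k).map (piece f K m T j)) : l ≠ [] := by
  obtain ⟨t, -, rfl⟩ := mem_map.1 hl
  exact piece_ne_nil hf hf0 j t

theorem formBody_odd (hf : StrictMono f) (hf0 : 0 < f 0) (hij : i < j) (hj : j < m) (n : ℕ) :
    ∃ zs, FormBody (n + 1) (n + 1) (seq f (n + 1) m n i) (seq f (n + 1) m n j) zs ∧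
      ∀ a ∈ zs, a ∈ Set.range f := by
  set P := piece f (n + 1) m n
  set A := (range' 1 n).map (P i)
  set B := (range' 1 n).map (P j)
  have hA : P i 0 :: A = (range' 0 (n + 1)).map (P i) := rfl
  have hB : P j 0 :: B = (range' 0 (n + 1)).map (P j) := rfl
  have hzs : accLengths 0 (P i 0 :: A) ++ P i 0 ++ accLengths 0 (P j 0 :: B) ++ P j 0 ++
      interact A B = (headRange f (n + 1) m n i ++ headRange f (n + 1) m n j ++
        roundBlocks f (n + 1) m n i j n).map f := by
    rw [hA, hB, accLengths_pieces hf.monotone, accLengths_pieces hf.monotone, interact_map_map]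
    simp [P, headRange, roundBlocks, piece, map_flatMap]
  obtain ⟨hsorted, hmem⟩ := pairwise_and_mem_range_of_sublist hf
    (pairwise_headRange_append hij hj
      (pairwise_roundBlocks hf.monotone hij hj le_rfl n.lt_succ_self)
      fun _ hx => headStart_le_of_mem_roundBlocks hx) (Sublist.refl _)
  rw [← hzs] at hsorted hmem
  refine ⟨_, ⟨_, A, _, B, length_seq_strictMono hf n hij, rfl, rfl,
    fun _ hl => ne_nil_of_mem_map_piece hf hf0 (hA ▸ hl),
    fun _ hl => ne_nil_of_mem_map_piece hf hf0 (hB ▸ hl),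
    by simp [A], by simp [B], rfl, hsorted⟩, hmem⟩

theorem formBody_even (hf : StrictMono f) (hf0 : 0 < f 0) (hij : i < j) (hj : j < m) (n : ℕ) :
    ∃ zs, FormBody (n + 2) (n + 1) (seq f (n + 2) m n i) (seq f (n + 2) m n j) zs ∧
      ∀ a ∈ zs, a ∈ Set.range f := by
  set P := piece f (n + 2) m n
  set A := (range' 1 (n + 1)).map (P i)
  have hA : P i 0 :: A = (range' 0 (n + 2)).map (P i) := rfl
  obtain ⟨b, bs, hB⟩ : ∃ b bs,
      (range' 0 n).map (P j) ++ [P j n ++ P j (n + 1)] = b :: bs :=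
    exists_cons_of_ne_nil (by simp)
  set R := roundBlocks f (n + 2) m n i j n ++
    (block f (n + 2) m n j (n + 1) ++ block f (n + 2) m n i (n + 1))
  have hd : accLengths 0 (b :: bs) <+ (range' (headStart f (n + 2) j) (n + 2)).map f := by
    have h := accLengths_append_merge_sublist 0 ((range' 0 n).map (P j)) (P j n) (P j (n + 1)) []
    rwa [hB, ← map_range'_add_two, accLengths_pieces hf.monotone] at h
  -- `interact (a :: as) (b :: bs) = a ++ b ++ interact as bs`, so the tail of the scheme after
  -- `d` can be read off the interaction of the unsplit piece lists.
  have htail : b ++ interact A bs = (block f (n + 2) m n j 0 ++ R).map f := by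
    have h : interact (P i 0 :: A) (b :: bs) =
        (block f (n + 2) m n i 0 ++ block f (n + 2) m n j 0 ++ R).map f := by
      rw [← hB, hA, map_range'_add_two, interact_append (by simp), interact_map_map]
      simp only [interact, flatten_cons, flatten_nil, append_nil, R, roundBlocks, map_append,
        map_flatMap, ← append_assoc, flatMap_range'_zero_append (fun t => P i t ++ P j t)]
      simp [P, piece]
    rw [interact, append_assoc, map_append, map_append, append_assoc] at h
    rw [map_append]
    exact append_cancel_left h
  have hsub : accLengths 0 (P i 0 :: A) ++ P i 0 ++ accLengths 0 (b :: bs) ++ b ++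
      interact A bs <+ (headRange f (n + 2) m n i ++ headRange f (n + 2) m n j ++ R).map f := by
    rw [append_assoc _ b, htail, hA, accLengths_pieces hf.monotone]
    simp only [headRange, map_append, append_assoc]
    exact (Sublist.refl _).append ((Sublist.refl _).append (hd.append (Sublist.refl _)))
  obtain ⟨hsorted, hmem⟩ := pairwise_and_mem_range_of_sublist hf
    (pairwise_headRange_append hij hj (pairwise_roundBlocks_append_last hf.monotone hij hj
      (by omega)) fun _ hx => headStart_le_of_mem_roundBlocks_append_last hx) hsub
  refine ⟨_, ⟨_, A, b, bs, length_seq_strictMono hf (n + 1) hij, rfl, ?_,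
    fun _ hl => ne_nil_of_mem_map_piece hf hf0 (hA ▸ hl), fun l hl => ?_,
    by simp [A], ?_, rfl, hsorted⟩, hmem⟩
  · rw [← hB, seq, map_range'_add_two]
    simp [P]
  · rw [← hB, mem_append, mem_singleton] at hl
    rcases hl with hl | rfl
    · exact ne_nil_of_mem_map_piece hf hf0 hl
    · exact append_ne_nil_of_left_ne_nil (piece_ne_nil hf hf0 j n) _
  · simpa using (congrArg length hB).symm

end Schemes

theorem exists_finset_of_forall_lt {α : Type*} [DecidableEq α] {s : ℕ → α}
    (hs : Function.Injective s) {m : ℕ} {P : α → Prop} {R : α → α → Prop}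
    (hP : ∀ j < m, P (s j)) (hR : ∀ i j, i < j → j < m → R (s i) (s j)) :
    ∃ M : Finset α, M.card = m ∧ (∀ x ∈ M, P x) ∧
      ∀ x ∈ M, ∀ y ∈ M, x ≠ y → R x y ∨ R y x := by
  refine ⟨(Finset.range m).image s, by rw [Finset.card_image_of_injective _ hs,
    Finset.card_range], ?_, ?_⟩
  · simp only [Finset.mem_image, Finset.mem_range]
    rintro _ ⟨j, hj, rfl⟩
    exact hP j hj
  · simp only [Finset.mem_image, Finset.mem_range]
    rintro _ ⟨i, hi, rfl⟩ _ ⟨j, hj, rfl⟩ hne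
    rcases lt_trichotomy i j with hij | rfl | hji
    · exact Or.inl (hR i j hij hj)
    · exact absurd rfl hne
    · exact Or.inr (hR j i hji hi)

theorem exists_interScheme {f : ℕ → ℕ} (hf : StrictMono f) (hf0 : 0 < f 0) {l : ℕ}
    (hl : 0 < l) (m : ℕ) : ∃ n T, ∀ i j, i < j → j < m →
      ∃ zs, InterScheme l (seq f (n + 1) m T i) (seq f (n + 1) m T j) zs ∧
        ∀ a ∈ zs, a ∈ Set.range f := by
  obtain ⟨n, rfl | rfl⟩ : ∃ n, l = 2 * n + 1 ∨ l = 2 * n + 2 :=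
    ⟨(l - 1) / 2, by omega⟩
  · refine ⟨n, n, fun i j hij hj => ?_⟩
    obtain ⟨zs, hzs, hmem⟩ := formBody_odd hf hf0 hij hj n
    exact ⟨zs, Or.inl ⟨n + 1, n.succ_pos, by omega, hzs⟩, hmem⟩
  · refine ⟨n + 1, n, fun i j hij hj => ?_⟩
    obtain ⟨zs, hzs, hmem⟩ := formBody_even hf hf0 hij hj n
    exact ⟨zs, Or.inr ⟨n + 1, n.succ_pos, by omega, hzs⟩, hmem⟩

end Larson

open Larson in
/-- Larson's Lemma 3.7: for every infinite `N ⊆ ℕ`, `m` and `l > 0` there is an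
`m`-element set `M` of strictly increasing sequences such that every pair from `M`
has form `l` with interaction scheme contained in `N`. -/
theorem lemma_3_7 (N : Set ℕ) (hN : N.Infinite) (m l : ℕ) (hl : 0 < l) :
    ∃ M : Finset (List ℕ), M.card = m ∧ (∀ x ∈ M, List.Pairwise (· < ·) x) ∧
      ∀ x ∈ M, ∀ y ∈ M, x ≠ y →
        ∃ zs, (InterScheme l x y zs ∨ InterScheme l y x zs) ∧ ∀ a ∈ zs, a ∈ N := by
  -- skipping the least element of `N`, which may be `0`, makes every block nonempty
  set f : ℕ → ℕ := fun n => Nat.nth (· ∈ N) (n + 1)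
  have hf : StrictMono f := fun a b hab => Nat.nth_strictMono hN (Nat.succ_lt_succ hab)
  have hf0 : 0 < f 0 := (Nat.zero_le _).trans_lt (Nat.nth_strictMono hN Nat.zero_lt_one)
  have hfN : Set.range f ⊆ N := Set.range_subset_iff.2 fun n => Nat.nth_mem_of_infinite hN _
  obtain ⟨n, T, hpair⟩ := exists_interScheme hf hf0 hl m
  obtain ⟨M, hcard, hsorted, hM⟩ :=
    exists_finset_of_forall_lt (length_seq_strictMono hf n).injective.of_comp
      (fun j hj => pairwise_seq hf hj)
      (R := fun x y => ∃ zs, InterScheme l x y zs ∧ ∀ a ∈ zs, a ∈ Set.range f) hpair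
  refine ⟨M, hcard, hsorted, fun x hx y hy hxy => ?_⟩
  rcases hM x hx y hy hxy with ⟨zs, h, hzs⟩ | ⟨zs, h, hzs⟩
  · exact ⟨zs, Or.inl h, fun a ha => hfN (hzs a ha)⟩
  · exact ⟨zs, Or.inr h, fun a ha => hfN (hzs a ha)⟩
end
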